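/- arXiv:2108.06026 — 9 statements merged into one kernel-verified Lean document; each statement's English description precedes it below -/
import Mathlib

section
/- Let f_1, …, f_m be real polynomials on ℝ^n and let A = {x ∈ ℝ^n : f_i(x) ≥ 0 for all i = 1,…,m}. Assume A is nonempty and convex, and that for every x ∈ A the set of gradients {∇f_i(x) : i such that f_i(x) = 0} is linearly independent. Then for every p ∈ ℝ^n and u ∈ ℝ^n, u is the metric projection of p onto A if and only if there exist c_1, …, c_m ∈ ℝ such that u − p = Σ_{i=1}^m c_i ∇f_i(u), f_i(u) ≥ 0, c_i ≥ 0, and c_i f_i(u) = 0 for all i = 1,…,m. -/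
open Filter

/-- `u` is the metric projection of `p` onto `S`. -/
def IsMetricProj {E : Type*} [NormedAddCommGroup E] (S : Set E) (p u : E) : Prop :=
  u ∈ S ∧ ∀ s ∈ S, ‖u - p‖ ≤ ‖s - p‖

/-!
On a convex set `A`, `u` is the projection of `p` iff `u ∈ A` and `⟪u - p, s - u⟫ ≥ 0` for all
`s ∈ A`. If the KKT conditions hold, every active constraint `f_i` attains its minimum `0` on `A`
at `u`, so `⟪∇f_i(u), s - u⟫ ≥ 0`, and the variational inequality follows by summing.

Conversely, linear independence of the active gradients yields `d₀` with `⟪∇f_i(u), d₀⟫ = 1` for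
every active `i`. For `d` in the linearized cone, `d + ε d₀` points strictly into `A`, so
`⟪u - p, d + ε d₀⟫ ≥ 0`, and letting `ε → 0` gives `⟪u - p, d⟫ ≥ 0`. Farkas' lemma for linearly
independent generators then yields the multipliers: `u - p` lies in the span of the active
gradients, and its coefficients are read off by pairing with a dual family.
-/

open Topology Set
open scoped RealInnerProductSpace

theorem HasDerivAt.eventually_pos_nhdsGT {φ : ℝ → ℝ} {D a : ℝ} (h : HasDerivAt φ D a)
    (ha : φ a = 0) (hD : 0 < D) : ∀ᶠ t in 𝓝[>] a, 0 < φ t := by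
  have hslope : Tendsto (slope φ a) (𝓝[>] a) (𝓝 D) :=
    h.tendsto_slope.mono_left (nhdsWithin_mono a fun _ ht => ne_of_gt ht)
  filter_upwards [hslope.eventually (eventually_gt_nhds hD), self_mem_nhdsWithin]
    with t ht hat
  rw [slope_def_field, ha, sub_zero] at ht
  exact (div_pos_iff_of_pos_right (sub_pos.2 hat)).1 ht

section Normed

variable {E : Type*} [NormedAddCommGroup E] [NormedSpace ℝ E]

theorem IsMinOn.fderiv_sub_nonneg {S : Set E} (hS : Convex ℝ S) {φ : E → ℝ} {u s : E}
    (hmin : IsMinOn φ S u) (hφ : DifferentiableAt ℝ φ u) (hu : u ∈ S) (hs : s ∈ S) :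
    0 ≤ fderiv ℝ φ u (s - u) :=
  hmin.localize.hasFDerivWithinAt_nonneg hφ.hasFDerivAt.hasFDerivWithinAt
    (sub_mem_posTangentConeAt_of_segment_subset (hS.segment_subset hu hs))

theorem eventually_nonneg_comp_add_smul {φ : E → ℝ} {u d : E} (hφ : DifferentiableAt ℝ φ u)
    (hu : 0 ≤ φ u) (hd : φ u = 0 → 0 < fderiv ℝ φ u d) :
    ∀ᶠ t in 𝓝[>] (0 : ℝ), 0 ≤ φ (u + t • d) := by
  have hline : HasDerivAt (fun t : ℝ => φ (u + t • d)) (fderiv ℝ φ u d) 0 :=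
    hφ.hasFDerivAt.hasLineDerivAt d
  rcases hu.eq_or_lt with hzero | hpos
  · exact (hline.eventually_pos_nhdsGT (by simpa using hzero.symm) (hd hzero.symm)).mono
      fun _ => le_of_lt
  · have : ∀ᶠ t in 𝓝 (0 : ℝ), 0 < φ (u + t • d) :=
      hline.continuousAt.eventually (lt_mem_nhds (by simpa using hpos))
    exact (this.filter_mono nhdsWithin_le_nhds).mono fun _ => le_of_lt

theorem nonneg_of_mem_linearizedCone {ι : Type*} [Finite ι] {φ : ι → E → ℝ} {u d₀ d : E}
    {ℓ : E →L[ℝ] ℝ} (hφ : ∀ i, DifferentiableAt ℝ (φ i) u) (hu : ∀ i, 0 ≤ φ i u)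
    (hℓ : ∀ s, (∀ i, 0 ≤ φ i s) → 0 ≤ ℓ (s - u))
    (hd₀ : ∀ i, φ i u = 0 → 0 < fderiv ℝ (φ i) u d₀)
    (hd : ∀ i, φ i u = 0 → 0 ≤ fderiv ℝ (φ i) u d) : 0 ≤ ℓ d := by
  have hstrict : ∀ d, (∀ i, φ i u = 0 → 0 < fderiv ℝ (φ i) u d) → 0 ≤ ℓ d := by
    intro d hd
    obtain ⟨t, ht, htpos⟩ := ((eventually_all.2 fun i =>
      eventually_nonneg_comp_add_smul (hφ i) (hu i) (hd i)).and self_mem_nhdsWithin).exists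
    have := hℓ _ ht
    rw [add_sub_cancel_left, map_smul, smul_eq_mul] at this
    exact nonneg_of_mul_nonneg_right this htpos
  have hlim : Tendsto (fun ε : ℝ => d + ε • d₀) (𝓝[>] 0) (𝓝 d) := by
    have : Continuous fun ε : ℝ => d + ε • d₀ := by fun_prop
    simpa using (this.tendsto 0).mono_left nhdsWithin_le_nhds
  refine (isClosed_le continuous_const ℓ.continuous).mem_of_tendsto hlim ?_
  filter_upwards [self_mem_nhdsWithin] with ε (hε : 0 < ε)
  refine hstrict _ fun i hi => ?_
  rw [map_add, map_smul, smul_eq_mul]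
  exact add_pos_of_nonneg_of_pos (hd i hi) (mul_pos hε (hd₀ i hi))

end Normed

section InnerProduct

variable {F : Type*} [NormedAddCommGroup F] [InnerProductSpace ℝ F]

theorem isMetricProj_iff_inner_nonneg {K : Set F} (hK : Convex ℝ K) {p u : F} (hu : u ∈ K) :
    IsMetricProj K p u ↔ ∀ s ∈ K, 0 ≤ ⟪u - p, s - u⟫ := by
  have : Nonempty K := ⟨⟨u, hu⟩⟩
  have hbdd : BddBelow (range fun w : K => ‖p - w‖) := ⟨0, by simp [lowerBounds]⟩
  have hinf : (∀ s ∈ K, ‖p - u‖ ≤ ‖p - s‖) ↔ ‖p - u‖ = ⨅ w : K, ‖p - w‖ :=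
    ⟨fun h => le_antisymm (le_ciInf fun w => h w w.2) (ciInf_le hbdd ⟨u, hu⟩),
      fun h s hs => h ▸ ciInf_le hbdd ⟨s, hs⟩⟩
  simp_rw [IsMetricProj, and_iff_right hu, norm_sub_rev _ p, hinf,
    norm_eq_iInf_iff_real_inner_le_zero hK hu, ← neg_sub u p, inner_neg_left, neg_nonpos]

theorem LinearIndependent.exists_inner_eq {ι : Type*} [Fintype ι] {g : ι → F}
    (hg : LinearIndependent ℝ g) (a : ι → ℝ) : ∃ d : F, ∀ i, ⟪g i, d⟫ = a i := by
  have := FiniteDimensional.span_of_finite ℝ (finite_range g)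
  let b := Module.Basis.span hg
  let d := (InnerProductSpace.toDual ℝ _).symm (LinearMap.toContinuousLinearMap (b.constr ℝ a))
  refine ⟨d, fun i => ?_⟩
  have hbi : (b i : F) = g i := by simp [b, Module.Basis.span_apply]
  rw [real_inner_comm, ← hbi, ← Submodule.coe_inner,
    InnerProductSpace.toDual_symm_apply, LinearMap.coe_toContinuousLinearMap',
    Module.Basis.constr_basis]

theorem LinearIndependent.exists_nonneg_of_inner_nonneg {ι : Type*} [Fintype ι] {g : ι → F}
    (hg : LinearIndependent ℝ g) {v : F} (hv : ∀ d, (∀ i, 0 ≤ ⟪g i, d⟫) → 0 ≤ ⟪v, d⟫) :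
    ∃ c : ι → ℝ, (∀ i, 0 ≤ c i) ∧ v = ∑ i, c i • g i := by
  classical
  have := FiniteDimensional.span_of_finite ℝ (finite_range g)
  have hspan : v ∈ Submodule.span ℝ (range g) := by
    rw [← Submodule.orthogonal_orthogonal (Submodule.span ℝ (range g))]
    intro w hw
    have hgw : ∀ i, ⟪g i, w⟫ = 0 := fun i =>
      Submodule.inner_right_of_mem_orthogonal (Submodule.subset_span (mem_range_self i)) hw
    have h₁ := hv w (by simp [hgw])
    have h₂ := hv (-w) (by simp [hgw])
    rw [inner_neg_right] at h₂
    rw [real_inner_comm]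
    linarith
  obtain ⟨c, rfl⟩ := (Submodule.mem_span_range_iff_exists_fun ℝ).1 hspan
  refine ⟨c, fun j => ?_, rfl⟩
  obtain ⟨d, hd⟩ := hg.exists_inner_eq (Pi.single j (1 : ℝ))
  have := hv d fun i => by rw [hd, Pi.single_apply]; split_ifs <;> norm_num
  simpa [sum_inner, real_inner_smul_left, hd, Pi.single_apply] using this

end InnerProduct

section KKT

variable {F : Type*} [NormedAddCommGroup F] [InnerProductSpace ℝ F] [CompleteSpace F]
  {ι : Type*} [Fintype ι] {φ : ι → F → ℝ} {p u : F}

theorem IsMetricProj.exists_kkt (hconv : Convex ℝ {x | ∀ i, 0 ≤ φ i x})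
    (hφ : ∀ i, DifferentiableAt ℝ (φ i) u)
    (hLI : LinearIndependent ℝ fun i : {i // φ i u = 0} => gradient (φ i) u)
    (hproj : IsMetricProj {x | ∀ i, 0 ≤ φ i x} p u) :
    ∃ c : ι → ℝ, u - p = ∑ i, c i • gradient (φ i) u ∧
      ∀ i, 0 ≤ φ i u ∧ 0 ≤ c i ∧ c i * φ i u = 0 := by
  classical
  have hu : ∀ i, 0 ≤ φ i u := hproj.1
  have hvar := (isMetricProj_iff_inner_nonneg hconv hproj.1).1 hproj
  obtain ⟨d₀, hd₀⟩ := hLI.exists_inner_eq 1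
  have hcone : ∀ d, (∀ i : {i // φ i u = 0}, 0 ≤ ⟪gradient (φ i) u, d⟫) → 0 ≤ ⟪u - p, d⟫ :=
    fun d hd => nonneg_of_mem_linearizedCone (ℓ := innerSL ℝ (u - p)) (d₀ := d₀) hφ hu hvar
      (fun i hi => by rw [← inner_gradient_left, hd₀ ⟨i, hi⟩, Pi.one_apply]; exact one_pos)
      (fun i hi => by simpa [← inner_gradient_left] using hd ⟨i, hi⟩)
  obtain ⟨c, hc, hsum⟩ := hLI.exists_nonneg_of_inner_nonneg hcone
  refine ⟨fun i => if h : φ i u = 0 then c ⟨i, h⟩ else 0, ?_, fun i => ⟨hu i, ?_, ?_⟩⟩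
  · beta_reduce
    rw [hsum, ← Fintype.sum_subtype_add_sum_subtype fun i => φ i u = 0,
      Fintype.sum_eq_zero (α := {i // ¬φ i u = 0}) _ fun i => by rw [dif_neg i.2, zero_smul],
      add_zero]
    exact Fintype.sum_congr _ _ fun i => by rw [dif_pos i.2]
  · beta_reduce
    split_ifs with h
    exacts [hc _, le_rfl]
  · beta_reduce
    split_ifs with h
    · rw [h, mul_zero]
    · rw [zero_mul]

theorem isMetricProj_of_kkt (hconv : Convex ℝ {x | ∀ i, 0 ≤ φ i x})
    (hφ : ∀ i, DifferentiableAt ℝ (φ i) u) {c : ι → ℝ}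
    (hsum : u - p = ∑ i, c i • gradient (φ i) u)
    (hkkt : ∀ i, 0 ≤ φ i u ∧ 0 ≤ c i ∧ c i * φ i u = 0) :
    IsMetricProj {x | ∀ i, 0 ≤ φ i x} p u := by
  have hu : u ∈ {x | ∀ i, 0 ≤ φ i x} := fun i => (hkkt i).1
  refine (isMetricProj_iff_inner_nonneg hconv hu).2 fun s hs => ?_
  rw [hsum, sum_inner]
  refine Finset.sum_nonneg fun i _ => ?_
  rw [real_inner_smul_left, inner_gradient_left]
  obtain ⟨-, hci, hcφ⟩ := hkkt i
  rcases mul_eq_zero.1 hcφ with hc0 | hφ0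
  · rw [hc0, zero_mul]
  · have hmin : IsMinOn (φ i) {x | ∀ i, 0 ≤ φ i x} u := fun x hx => by
      simpa [hφ0] using hx i
    exact mul_nonneg hci (hmin.fderiv_sub_nonneg hconv (hφ i) hu hs)

end KKT

theorem MvPolynomial.differentiable_eval_euclideanSpace {σ : Type*} [Fintype σ]
    (P : MvPolynomial σ ℝ) :
    Differentiable ℝ fun y : EuclideanSpace ℝ σ => eval (fun j => y j) P := fun x =>
  (AnalyticAt.aeval_mvPolynomial (f := fun y : EuclideanSpace ℝ σ => (y ·))
    (fun i => (EuclideanSpace.proj (𝕜 := ℝ) i).analyticAt x) P).differentiableAt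

theorem stmt0_general (n m : ℕ) (f : Fin m → MvPolynomial (Fin n) ℝ)
    (A : Set (EuclideanSpace ℝ (Fin n)))
    (hA : A = {x | ∀ i, 0 ≤ MvPolynomial.eval (fun j => x j) (f i)})
    (hconv : Convex ℝ A)
    (hLI : ∀ x ∈ A, LinearIndependent ℝ
      (fun i : {i : Fin m // MvPolynomial.eval (fun j => x j) (f i) = 0} =>
        gradient (fun y : EuclideanSpace ℝ (Fin n) =>
          MvPolynomial.eval (fun j => y j) (f i.1)) x))
    (p u : EuclideanSpace ℝ (Fin n)) :
    IsMetricProj A p u ↔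
      ∃ c : Fin m → ℝ,
        u - p = ∑ i, c i • gradient (fun y : EuclideanSpace ℝ (Fin n) =>
            MvPolynomial.eval (fun j => y j) (f i)) u ∧
        ∀ i, 0 ≤ MvPolynomial.eval (fun j => u j) (f i) ∧ 0 ≤ c i ∧
          c i * MvPolynomial.eval (fun j => u j) (f i) = 0 := by
  subst hA
  set φ : Fin m → EuclideanSpace ℝ (Fin n) → ℝ :=
    fun i y => MvPolynomial.eval (fun j => y j) (f i)
  have hφ : ∀ i, DifferentiableAt ℝ (φ i) u := fun i => (f i).differentiable_eval_euclideanSpace u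
  exact ⟨fun hproj => hproj.exists_kkt hconv hφ (hLI u hproj.1),
    fun ⟨_, hsum, hkkt⟩ => isMetricProj_of_kkt hconv hφ hsum hkkt⟩

theorem stmt0 (n m : ℕ) (f : Fin m → MvPolynomial (Fin n) ℝ)
    (A : Set (EuclideanSpace ℝ (Fin n)))
    (hA : A = {x | ∀ i, 0 ≤ MvPolynomial.eval (fun j => x j) (f i)})
    (hne : A.Nonempty) (hconv : Convex ℝ A)
    (hLI : ∀ x ∈ A, LinearIndependent ℝ
      (fun i : {i : Fin m // MvPolynomial.eval (fun j => x j) (f i) = 0} =>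
        gradient (fun y : EuclideanSpace ℝ (Fin n) =>
          MvPolynomial.eval (fun j => y j) (f i.1)) x))
    (p u : EuclideanSpace ℝ (Fin n)) :
    IsMetricProj A p u ↔
      ∃ c : Fin m → ℝ,
        u - p = ∑ i, c i • gradient (fun y : EuclideanSpace ℝ (Fin n) =>
            MvPolynomial.eval (fun j => y j) (f i)) u ∧
        ∀ i, 0 ≤ MvPolynomial.eval (fun j => u j) (f i) ∧ 0 ≤ c i ∧
          c i * MvPolynomial.eval (fun j => u j) (f i) = 0 :=
  stmt0_general n m f A hA hconv hLI p u
end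

section
/- Let C > 0, let q ≥ 1 be a natural number, let ε > 0, and let h : ℝ → ℝ be analytic on (−ε, ε). Suppose {x_k} is a sequence of reals with x_k > 0 and x_k < ε for all k, x_k → 0, and x_{k+1}(1 + C x_{k+1}^q + x_{k+1}^{q+1} h(x_{k+1})) = x_k for all k = 0, 1, 2, …. Then lim_{k→∞} (qC)^{1/q} k^{1/q} x_k = 1. -/
/-!
With `t = x (k+1)` the recurrence reads `x k = t (1 + t ^ q B_k)` where `B_k = C + t h(t) → C`.
Expanding `(1 + s) ^ (-q) = 1 - q s + o(s)` gives `x (k+1) ^ (-q) - x k ^ (-q) → q C`, so by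
Stolz–Cesàro `x k ^ (-q) / k → q C`, and taking `q`-th roots gives the claim.
-/

open Filter Topology

theorem tendsto_one_sub_inv_one_add_pow_div (q : ℕ) :
    Tendsto (fun s : ℝ => (1 - ((1 + s) ^ q)⁻¹) / s) (𝓝[≠] 0) (𝓝 q) := by
  have hpow : HasDerivAt (fun s : ℝ => (1 + s) ^ q) (q * (1 + 0) ^ (q - 1) * 1) 0 :=
    ((hasDerivAt_id 0).const_add 1).pow q
  have hderiv : HasDerivAt (fun s : ℝ => ((1 + s) ^ q)⁻¹) (-(q : ℝ)) 0 :=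
    (hpow.inv (by norm_num)).congr_deriv (by simp)
  refine ((hasDerivAt_iff_tendsto_slope.mp hderiv).neg.congr fun s => ?_).trans (by rw [neg_neg])
  simp only [slope_def_field]
  ring

theorem tendsto_inv_pow_sub_inv_pow_mul_one_add {α : Type*} {l : Filter α} {t B : α → ℝ}
    {c : ℝ} {q : ℕ} (hq : q ≠ 0) (ht : Tendsto t l (𝓝[≠] 0)) (hB : Tendsto B l (𝓝 c))
    (hc : c ≠ 0) :
    Tendsto (fun a => (t a ^ q)⁻¹ - ((t a * (1 + t a ^ q * B a)) ^ q)⁻¹) l (𝓝 (q * c)) := by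
  obtain ⟨ht0, ht_ne⟩ := tendsto_nhdsWithin_iff.mp ht
  have hs : Tendsto (fun a => t a ^ q * B a) l (𝓝[≠] 0) := by
    refine tendsto_nhdsWithin_iff.mpr ⟨?_, ?_⟩
    · simpa [zero_pow hq] using (ht0.pow q).mul hB
    · filter_upwards [ht_ne, hB.eventually_ne hc] with a hta hBa
      exact mul_ne_zero (pow_ne_zero q hta) hBa
  have hlim := ((tendsto_one_sub_inv_one_add_pow_div q).comp hs).mul hB
  refine hlim.congr' ?_
  filter_upwards [ht_ne, hB.eventually_ne hc] with a (hta : t a ≠ 0) hBa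
  simp only [Function.comp_apply, mul_pow (t a), mul_inv]
  field_simp

theorem tendsto_div_natCast_of_tendsto_sub {u : ℕ → ℝ} {L : ℝ}
    (h : Tendsto (fun n => u (n + 1) - u n) atTop (𝓝 L)) :
    Tendsto (fun n : ℕ => u n / n) atTop (𝓝 L) := by
  have hinit : Tendsto (fun n : ℕ => (n : ℝ)⁻¹ * u 0) atTop (𝓝 0) := by
    simpa using tendsto_inv_atTop_nhds_zero_nat.mul_const (u 0)
  have hsum := h.cesaro.add hinit
  rw [add_zero] at hsum
  refine hsum.congr fun n => ?_
  simp only [Finset.sum_range_sub]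
  ring

theorem tendsto_rpow_mul_of_tendsto_inv_pow_div {x : ℕ → ℝ} {a : ℝ} {q : ℕ} (hq : q ≠ 0)
    (ha : 0 < a) (hx : ∀ n, 0 < x n) (h : Tendsto (fun n : ℕ => (x n ^ q)⁻¹ / n) atTop (𝓝 a)) :
    Tendsto (fun n : ℕ => a ^ ((1 : ℝ) / q) * (n : ℝ) ^ ((1 : ℝ) / q) * x n) atTop (𝓝 1) := by
  have hratio : Tendsto (fun n : ℕ => a / ((x n ^ q)⁻¹ / n)) atTop (𝓝 (a / a)) :=
    tendsto_const_nhds.div h ha.ne'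
  rw [div_self ha.ne'] at hratio
  have hroot := hratio.rpow_const (p := (1 : ℝ) / q) (Or.inr (by positivity))
  rw [Real.one_rpow] at hroot
  refine hroot.congr' ?_
  filter_upwards [eventually_gt_atTop 0] with n hn
  have hxq : 0 < x n ^ q := pow_pos (hx n) q
  have hroot_x : (x n ^ q) ^ ((1 : ℝ) / q) = x n := by
    rw [← Real.rpow_natCast, ← Real.rpow_mul (hx n).le, mul_one_div_cancel (by exact_mod_cast hq),
      Real.rpow_one]
  rw [div_div_eq_mul_div, div_inv_eq_mul, Real.mul_rpow (by positivity) hxq.le,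
    Real.mul_rpow ha.le (by positivity), hroot_x]

theorem stmt1_general (C : ℝ) (hC : 0 < C) (q : ℕ) (hq : 1 ≤ q) (ε : ℝ) (hε : 0 < ε)
    (h : ℝ → ℝ) (hh : ∀ t ∈ Set.Ioo (-ε) ε, AnalyticAt ℝ h t)
    (x : ℕ → ℝ) (hpos : ∀ k, 0 < x k)
    (hlim : Tendsto x atTop (nhds 0))
    (hrec : ∀ k, x (k + 1) * (1 + C * x (k + 1) ^ q + x (k + 1) ^ (q + 1) * h (x (k + 1))) = x k) :
    Tendsto (fun k : ℕ => ((q : ℝ) * C) ^ ((1 : ℝ) / q) * (k : ℝ) ^ ((1 : ℝ) / q) * x k)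
      atTop (nhds 1) := by
  have hq0 : q ≠ 0 := Nat.one_le_iff_ne_zero.mp hq
  have hnext : Tendsto (fun k => x (k + 1)) atTop (𝓝 0) := hlim.comp (tendsto_add_atTop_nat 1)
  have hnext_ne : Tendsto (fun k => x (k + 1)) atTop (𝓝[≠] 0) :=
    tendsto_nhdsWithin_iff.mpr ⟨hnext, .of_forall fun k => (hpos (k + 1)).ne'⟩
  have hB : Tendsto (fun k => C + x (k + 1) * h (x (k + 1))) atTop (𝓝 C) := by
    have hcont : ContinuousAt h 0 := (hh 0 ⟨neg_lt_zero.mpr hε, hε⟩).continuousAt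
    simpa using tendsto_const_nhds.add (hnext.mul (hcont.tendsto.comp hnext))
  have hdiff : Tendsto (fun k => (x (k + 1) ^ q)⁻¹ - (x k ^ q)⁻¹) atTop (𝓝 (q * C)) := by
    refine (tendsto_inv_pow_sub_inv_pow_mul_one_add hq0 hnext_ne hB hC.ne').congr fun k => ?_
    rw [← hrec k]
    ring
  exact tendsto_rpow_mul_of_tendsto_inv_pow_div hq0 (by positivity) hpos
    (tendsto_div_natCast_of_tendsto_sub hdiff)

theorem stmt1 (C : ℝ) (hC : 0 < C) (q : ℕ) (hq : 1 ≤ q) (ε : ℝ) (hε : 0 < ε)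
    (h : ℝ → ℝ) (hh : ∀ t ∈ Set.Ioo (-ε) ε, AnalyticAt ℝ h t)
    (x : ℕ → ℝ) (hpos : ∀ k, 0 < x k) (hlt : ∀ k, x k < ε)
    (hlim : Tendsto x atTop (nhds 0))
    (hrec : ∀ k, x (k + 1) * (1 + C * x (k + 1) ^ q + x (k + 1) ^ (q + 1) * h (x (k + 1))) = x k) :
    Tendsto (fun k : ℕ => ((q : ℝ) * C) ^ ((1 : ℝ) / q) * (k : ℝ) ^ ((1 : ℝ) / q) * x k)
      atTop (nhds 1) :=
  stmt1_general C hC q hq ε hε h hh x hpos hlim hrec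
end

section
/- Let C > 0, let q ≥ 1 be a natural number, let ε > 0, and let h : ℝ → ℝ be analytic on (−ε, ε). Suppose {x_k} is a sequence of reals with x_k ≥ 0 and x_k < ε for all k, x_k → 0, and x_{k+1}(1 + C x_{k+1}^q + x_{k+1}^{q+1} h(x_{k+1})) ≤ x_k for all k = 0, 1, 2, …. Then limsup_{k→∞} (qC)^{1/q} k^{1/q} x_k ≤ 1. -/
open Filter
set_option maxHeartbeats 2000000

theorem stmt2 (C : ℝ) (hC : 0 < C) (q : ℕ) (hq : 1 ≤ q) (ε : ℝ) (hε : 0 < ε)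
    (h : ℝ → ℝ) (hh : ∀ t ∈ Set.Ioo (-ε) ε, AnalyticAt ℝ h t)
    (x : ℕ → ℝ) (hpos : ∀ k, 0 ≤ x k) (hlt : ∀ k, x k < ε)
    (hlim : Tendsto x atTop (nhds 0))
    (hrec : ∀ k, x (k + 1) * (1 + C * x (k + 1) ^ q + x (k + 1) ^ (q + 1) * h (x (k + 1))) ≤ x k) :
    Filter.limsup (fun k : ℕ => ((q : ℝ) * C) ^ ((1 : ℝ) / q) * (k : ℝ) ^ ((1 : ℝ) / q) * x k)
      atTop ≤ 1 := by
  have hq0 : q ≠ 0 := by omega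
  have hq1 : (1:ℝ) ≤ (q:ℝ) := by exact_mod_cast hq
  have hqC : 0 < (q:ℝ) * C := by positivity
  -- nonnegativity of the sequence under limsup
  have hf0 : ∀ k : ℕ, 0 ≤ ((q : ℝ) * C) ^ ((1 : ℝ) / q) * (k : ℝ) ^ ((1 : ℝ) / q) * x k := by
    intro k
    have := hpos k
    positivity
  -- boundedness of h near 0
  have hcont : ContinuousAt h 0 := (hh 0 ⟨by linarith, hε⟩).continuousAt
  obtain ⟨δ0, hδ0, hδ0h⟩ := Metric.continuousAt_iff.mp hcont 1 one_pos
  set A : ℝ := |h 0| + 1 with hA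
  have hA1 : 1 ≤ A := by rw [hA]; linarith [abs_nonneg (h 0)]
  have hbound : ∀ u : ℝ, |u| < δ0 → |h u| ≤ A := by
    intro u hu
    have := hδ0h (by simpa [Real.dist_eq] using hu)
    rw [Real.dist_eq] at this
    have := abs_sub_abs_le_abs_sub (h u) (h 0)
    rw [hA]; linarith
  -- reduce to: for every b > 1, limsup ≤ b
  refine le_of_forall_gt_imp_ge_of_dense ?_
  intro b hb1
  refine limsup_le_of_le (isCoboundedUnder_le_of_le atTop hf0) ?_
  -- choose parameters
  obtain ⟨η, hηdef⟩ : ∃ η : ℝ, η = (1 - (1/b)^q) / 2 := ⟨_, rfl⟩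
  have hb0 : 0 < b := by linarith
  have hinvb : (1/b)^q < 1 := by
    apply pow_lt_one₀ (by positivity) _ hq0
    rw [div_lt_one hb0]; linarith
  have hinvb0 : 0 < (1/b)^q := by positivity
  have hη : 0 < η := by rw [hηdef]; linarith
  have hη2 : η < 1/2 := by rw [hηdef]; linarith
  obtain ⟨δ, hδdef⟩ : ∃ δ : ℝ, δ = min (δ0/2) (min 1 (min (C*η/(3*A)) (η/(3*((q:ℝ)*C))))) := ⟨_, rfl⟩
  have hδpos : 0 < δ := by
    rw [hδdef]
    refine lt_min (by linarith) (lt_min one_pos (lt_min (by positivity) (by positivity)))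
  have hδ1 : δ ≤ 1 := hδdef ▸ le_trans (min_le_right _ _) (min_le_left _ _)
  have hδA : δ * A ≤ C * η / 3 := by
    have h1 : δ ≤ C*η/(3*A) := hδdef ▸ le_trans (min_le_right _ _)
      (le_trans (min_le_right _ _) (min_le_left _ _))
    have hA0 : 0 < A := by linarith
    rw [le_div_iff₀ (by positivity)] at h1
    nlinarith
  have hδq : (q:ℝ) * C * δ ^ q ≤ η / 3 := by
    have h1 : δ ≤ η/(3*((q:ℝ)*C)) := hδdef ▸ le_trans (min_le_right _ _)
      (le_trans (min_le_right _ _) (min_le_right _ _))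
    have h2 : δ ^ q ≤ δ ^ 1 := pow_le_pow_of_le_one hδpos.le hδ1 hq
    rw [pow_one] at h2
    rw [le_div_iff₀ (by positivity)] at h1
    nlinarith
  have hδδ0 : δ < δ0 := lt_of_le_of_lt (hδdef ▸ min_le_left _ _) (by linarith)
  -- N such that x k ≤ δ for k ≥ N
  obtain ⟨N, hN⟩ := (Metric.tendsto_atTop.mp hlim δ hδpos)
  have hNδ : ∀ k, N ≤ k → x k ≤ δ := by
    intro k hk
    have := hN k hk
    rw [Real.dist_eq, sub_zero, abs_of_nonneg (hpos k)] at this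
    linarith
  obtain ⟨K, hKdef⟩ : ∃ K : ℝ, K = (q:ℝ) * C * (1 - η) := ⟨_, rfl⟩
  have hK : 0 < K := by rw [hKdef]; nlinarith
  -- lower bound on the factor
  have hfac : ∀ k, N ≤ k →
      1 + C * x (k+1) ^ q * (1 - η/3) ≤ 1 + C * x (k+1) ^ q + x (k+1) ^ (q+1) * h (x (k+1)) := by
    intro k hk
    have hu0 : 0 ≤ x (k+1) := hpos _
    have huδ : x (k+1) ≤ δ := hNδ _ (by omega)
    revert hu0 huδ
    generalize x (k+1) = u
    intro hu0 huδ
    have habs : |h u| ≤ A := hbound u (by rw [abs_of_nonneg hu0]; linarith)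
    have h1 : u ^ (q+1) * |h u| ≤ u ^ q * (C * η / 3) := by
      have : u ^ (q+1) = u ^ q * u := by ring
      rw [this]
      have hup : 0 ≤ u ^ q := pow_nonneg hu0 q
      have hm : u * |h u| ≤ δ * A := by
        apply mul_le_mul huδ habs (abs_nonneg _) hδpos.le
      calc u ^ q * u * |h u| = u ^ q * (u * |h u|) := by ring
        _ ≤ u ^ q * (δ * A) := mul_le_mul_of_nonneg_left hm hup
        _ ≤ u ^ q * (C * η / 3) := mul_le_mul_of_nonneg_left hδA hup
    have h2 : -(u ^ q * (C * η / 3)) ≤ u ^ (q+1) * h u := by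
      have := neg_abs_le (h u)
      have hup : 0 ≤ u ^ (q+1) := pow_nonneg hu0 _
      nlinarith [abs_nonneg (h u), mul_le_mul_of_nonneg_left (neg_abs_le (h u)) hup]
    have he : C * u ^ q * (1 - η/3) = C * u ^ q - u ^ q * (C * η / 3) := by ring
    linarith
  have hmono : ∀ k, N ≤ k → x (k+1) ≤ x k := by
    intro k hk
    have h1 := hfac k hk
    have hu0 : 0 ≤ x (k+1) := hpos _
    have h2 : (1:ℝ) ≤ 1 + C * x (k+1) ^ q * (1 - η/3) := by
      have : 0 ≤ C * x (k+1) ^ q * (1 - η/3) := by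
        apply mul_nonneg (mul_nonneg hC.le (pow_nonneg hu0 q)); linarith
      linarith
    calc x (k+1) = x (k+1) * 1 := by ring
      _ ≤ x (k+1) * (1 + C * x (k+1) ^ q + x (k+1) ^ (q+1) * h (x (k+1))) :=
          mul_le_mul_of_nonneg_left (by linarith) hu0
      _ ≤ x k := hrec k
  -- the key step
  have hstep : ∀ k, N ≤ k → 0 < x (k+1) → 1 / x k ^ q + K ≤ 1 / x (k+1) ^ q := by
    intro k hk hu
    have huδ : x (k+1) ≤ δ := hNδ _ (by omega)
    have hv : x (k+1) * (1 + C * x (k+1) ^ q * (1 - η/3)) ≤ x k :=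
      le_trans (mul_le_mul_of_nonneg_left (hfac k hk) (hpos _)) (hrec k)
    have hvnn : 0 ≤ x k := hpos k
    revert hu huδ hv hvnn
    generalize x (k+1) = u
    generalize x k = v
    intro hu huδ hv hvnn
    obtain ⟨a, hadef⟩ : ∃ a : ℝ, a = C * u ^ q * (1 - η/3) := ⟨_, rfl⟩
    have ha0 : 0 ≤ a := by
      rw [hadef]
      apply mul_nonneg (mul_nonneg hC.le (pow_nonneg hu.le q)); linarith
    obtain ⟨s, hsdef⟩ : ∃ s : ℝ, s = (q:ℝ) * C * (1 - η/3) * u ^ q := ⟨_, rfl⟩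
    have hs0 : 0 ≤ s := by
      rw [hsdef]
      apply mul_nonneg (mul_nonneg (mul_nonneg (by positivity) hC.le) (by linarith)) (pow_nonneg hu.le q)
    have hs3 : s ≤ η / 3 := by
      have h1 : u ^ q ≤ δ ^ q := pow_le_pow_left₀ hu.le huδ q
      have h2 : (q:ℝ) * C * (1 - η/3) * u ^ q ≤ (q:ℝ) * C * u ^ q := by
        nlinarith [mul_nonneg (mul_nonneg (le_of_lt (by positivity : (0:ℝ) < (q:ℝ))) hC.le) (pow_nonneg hu.le q)]
      have h3 : (q:ℝ) * C * u ^ q ≤ (q:ℝ) * C * δ ^ q := by nlinarith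
      rw [hsdef]; linarith
    have hbern : 1 + (q:ℝ) * a ≤ (1 + a) ^ q := one_add_mul_le_pow (by linarith) q
    have hqa : (q:ℝ) * a = s := by rw [hadef, hsdef]; ring
    have hvq : u ^ q * (1 + s) ≤ v ^ q := by
      have h1 : (u * (1 + a)) ^ q ≤ v ^ q := by
        apply pow_le_pow_left₀ (by positivity)
        rw [hadef]; exact hv
      rw [mul_pow] at h1
      have h2 : u ^ q * (1 + s) ≤ u ^ q * (1 + a) ^ q := by
        apply mul_le_mul_of_nonneg_left _ (pow_nonneg hu.le q)
        rw [← hqa]; exact hbern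
      linarith
    have huq : 0 < u ^ q := pow_pos hu q
    have h1s : (0:ℝ) < 1 + s := by linarith
    have hvpos : 0 < v := lt_of_lt_of_le (by nlinarith [mul_pos hu (show (0:ℝ) < 1 + C * u ^ q * (1 - η/3) by nlinarith [mul_nonneg (mul_nonneg hC.le (pow_nonneg hu.le q)) (show (0:ℝ) ≤ 1 - η/3 by linarith)])]) hv
    have hvq0 : 0 < v ^ q := pow_pos hvpos q
    have hdiv : 1 / v ^ q ≤ 1 / (u ^ q * (1 + s)) :=
      one_div_le_one_div_of_le (mul_pos huq h1s) hvq
    have hident : 1 / u ^ q - 1 / (u ^ q * (1 + s)) = (q:ℝ) * C * (1 - η/3) / (1 + s) := by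
      rw [div_sub_div _ _ huq.ne' (mul_pos huq h1s).ne',
        div_eq_div_iff (mul_pos huq (mul_pos huq h1s)).ne' h1s.ne', hsdef]
      ring
    have hfinal : K ≤ (q:ℝ) * C * (1 - η/3) / (1 + s) := by
      rw [le_div_iff₀ h1s, hKdef]
      nlinarith [mul_le_mul_of_nonneg_left hs3 (le_of_lt (mul_pos (by positivity : (0:ℝ) < (q:ℝ)) hC)),
        mul_nonneg (mul_nonneg (Nat.cast_nonneg q) hC.le) (mul_nonneg hη.le hs0)]
    linarith
  -- induction
  have hind : ∀ m : ℕ, 0 < x (N + m) → (m:ℝ) * K ≤ 1 / x (N + m) ^ q := by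
    intro m
    induction m with
    | zero =>
      intro hp
      simp only [Nat.cast_zero, zero_mul]
      positivity
    | succ m ih =>
      intro hp
      have hNm : N ≤ N + m := by omega
      have hx1 : 0 < x (N + m + 1) := hp
      have hp' : 0 < x (N + m) := lt_of_lt_of_le hx1 (hmono (N + m) hNm)
      have h1 := ih hp'
      have h2 := hstep (N + m) hNm hx1
      have hxeq : x (N + (m + 1)) = x (N + m + 1) := rfl
      rw [hxeq]
      push_cast
      linarith
  -- conclude the eventual bound
  have hB : 1 < b ^ q * (1 - η) := by
    have hbq : 1 < b ^ q := one_lt_pow₀ hb1 hq0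
    have hprod : b ^ q * (1/b) ^ q = 1 := by
      rw [← mul_pow]
      rw [mul_one_div, div_self (ne_of_gt hb0), one_pow]
    rw [hηdef]
    nlinarith
  obtain ⟨B, hBdef⟩ : ∃ B : ℝ, B = b ^ q * (1 - η) := ⟨_, rfl⟩
  have hev1 : ∀ᶠ k : ℕ in atTop, B * (N:ℝ) / (B - 1) ≤ (k:ℝ) :=
    tendsto_natCast_atTop_atTop.eventually_ge_atTop _
  filter_upwards [hev1, eventually_ge_atTop (N + 1)] with k hk1 hk2
  by_cases hx0 : x k = 0
  · rw [hx0, mul_zero]; linarith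
  have hxk : 0 < x k := lt_of_le_of_ne (hpos k) (Ne.symm hx0)
  obtain ⟨m, hmdef⟩ : ∃ m : ℕ, m = k - N := ⟨_, rfl⟩
  have hkm : k = N + m := by omega
  have hm1 : 1 ≤ m := by omega
  have hmcast : (m:ℝ) = (k:ℝ) - (N:ℝ) := by
    rw [hmdef]; push_cast [Nat.cast_sub (by omega : N ≤ k)]; ring
  have hindk : (m:ℝ) * K ≤ 1 / x k ^ q := by
    have := hind m (by rw [← hkm]; exact hxk)
    rwa [← hkm] at this
  have hmK : 0 < (m:ℝ) * K := by
    apply mul_pos _ hK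
    exact_mod_cast Nat.pos_of_ne_zero (by omega)
  have hxq : 0 < x k ^ q := pow_pos hxk q
  have hxub : x k ^ q * ((m:ℝ) * K) ≤ 1 := by
    have := mul_le_mul_of_nonneg_left hindk hxq.le
    rwa [mul_one_div, div_self (ne_of_gt hxq)] at this
  -- k ≤ B * (k - N)
  have hkB : (k:ℝ) ≤ B * ((k:ℝ) - (N:ℝ)) := by
    have hB1 : 0 < B - 1 := by linarith
    rw [div_le_iff₀ hB1] at hk1
    have hNk : (N:ℝ) ≤ (k:ℝ) := by exact_mod_cast (by omega : N ≤ k)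
    nlinarith
  -- now convert to the rpow statement
  apply le_of_pow_le_pow_left₀ hq0 (by linarith : (0:ℝ) ≤ b)
  rw [mul_pow, mul_pow, one_div,
    Real.rpow_inv_natCast_pow hqC.le hq0,
    Real.rpow_inv_natCast_pow (Nat.cast_nonneg k) hq0]
  -- goal : q*C * k * x k ^ q ≤ b ^ q
  have hkR : 0 ≤ (k:ℝ) := Nat.cast_nonneg k
  have key : (q:ℝ) * C * (k:ℝ) * x k ^ q ≤ b ^ q := by
    have h1 : (q:ℝ) * C * (k:ℝ) ≤ b ^ q * ((m:ℝ) * K) := by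
      rw [hKdef, hBdef] at *
      rw [hmcast]
      nlinarith [mul_le_mul_of_nonneg_left hkB (le_of_lt hqC)]
    nlinarith [mul_le_mul_of_nonneg_left hxub (by positivity : (0:ℝ) ≤ b ^ q)]
  linarith [key]
end

section
/- Let g : ℝ^n → ℝ be a convex polynomial function with g(x) ≥ 0 for all x, and let A = {(x, z) ∈ ℝ^n × ℝ : z ≥ g(x)}. Let X ∈ ℝ^n be such that (X, 0) ∉ A, i.e., g(X) > 0. Then for (x, z) ∈ ℝ^n × ℝ, the point (x, z) equals the metric projection of (X, 0) onto A if and only if x_i + (∂g/∂x_i)(x) · g(x) = X_i for all i = 1, …, n and z = g(x). -/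
open MvPolynomial
open scoped RealInnerProductSpace

section DotProductCLM

variable {𝕜 ι : Type*} [NontriviallyNormedField 𝕜] [Fintype ι]

def dotProductCLM (d : ι → 𝕜) : (ι → 𝕜) →L[𝕜] 𝕜 :=
  ∑ j, d j • ContinuousLinearMap.proj j

@[simp]
theorem dotProductCLM_apply (d v : ι → 𝕜) : dotProductCLM d v = d ⬝ᵥ v := by
  simp [dotProductCLM, dotProduct]

end DotProductCLM

theorem MvPolynomial.hasFDerivAt_eval {𝕜 σ : Type*} [NontriviallyNormedField 𝕜] [Fintype σ]
    [DecidableEq σ] (p : MvPolynomial σ 𝕜) (x : σ → 𝕜) :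
    HasFDerivAt (fun y => eval y p) (dotProductCLM fun j => eval x (pderiv j p)) x := by
  induction p using MvPolynomial.induction_on with
  | C a =>
    simp only [eval_C]
    refine (hasFDerivAt_const a x).congr_fderiv ?_
    ext v; simp
  | add p q hp hq =>
    simp only [map_add]
    refine (hp.add hq).congr_fderiv ?_
    ext v; simp [dotProduct, add_mul, Finset.sum_add_distrib]
  | mul_X p i hp =>
    simp only [eval_mul, eval_X]
    refine (hp.mul (hasFDerivAt_apply i x)).congr_fderiv ?_
    ext v
    simp [pderiv_X, dotProduct, add_mul, Finset.sum_add_distrib, Pi.single_apply, Finset.mul_sum,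
      apply_ite (eval x), add_comm, mul_assoc]

theorem ConvexOn.add_fderiv_sub_le {E : Type*} [NormedAddCommGroup E] [NormedSpace ℝ E]
    {S : Set E} {f : E → ℝ} {f' : E →L[ℝ] ℝ} {x y : E} (hf : ConvexOn ℝ S f) (hx : x ∈ S)
    (hy : y ∈ S) (hf' : HasFDerivAt f f' x) : f x + f' (y - x) ≤ f y := by
  set L : ℝ →ᵃ[ℝ] E := AffineMap.lineMap x y
  have hL0 : L 0 = x := AffineMap.lineMap_apply_zero x y
  have hL1 : L 1 = y := AffineMap.lineMap_apply_one x y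
  have hline : ConvexOn ℝ (L ⁻¹' S) (f ∘ L) := hf.comp_affineMap L
  have hderiv : HasDerivAt (f ∘ L) (f' (y - x)) 0 :=
    (hL0 ▸ hf').comp_hasDerivAt 0 AffineMap.hasDerivAt_lineMap
  have hslope := hline.le_slope_of_hasDerivAt (by simpa [hL0]) (by simpa [hL1]) zero_lt_one hderiv
  rw [slope_def_field, Function.comp_apply, Function.comp_apply, hL0, hL1] at hslope
  linarith

section Variational

variable {ι : Type*} [Fintype ι] {f : (ι → ℝ) → ℝ} {d x X : ι → ℝ} {z : ℝ}

theorem gradient_eq_of_forall_dotProduct_le [DecidableEq ι]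
    (hf : HasFDerivAt f (dotProductCLM d) x)
    (hVI : ∀ s t, f s ≤ t → (X - x) ⬝ᵥ (s - x) ≤ z * (t - z))
    (hfx : 0 ≤ f x) (hz : f x ≤ z) :
    (∀ i, x i + d i * f x = X i) ∧ z = f x := by
  have hzx : z = f x := by
    have hx := hVI x (f x) le_rfl
    rw [sub_self, dotProduct_zero] at hx
    nlinarith
  subst hzx
  refine ⟨fun i => ?_, rfl⟩
  have hmin : IsLocalMin (fun s => f x * f s - dotProductCLM (X - x) s) x := by
    refine Filter.Eventually.of_forall fun s => ?_
    have hs := hVI s (f s) le_rfl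
    simp only [dotProductCLM_apply, dotProduct_sub] at hs ⊢
    linarith
  have hderiv : HasFDerivAt (fun s => f x * f s - dotProductCLM (X - x) s)
      (f x • dotProductCLM d - dotProductCLM (X - x)) x :=
    (hf.const_mul (f x)).sub (dotProductCLM (X - x)).hasFDerivAt
  have hi := congrArg (· (Pi.single i 1)) (hmin.hasFDerivAt_eq_zero hderiv)
  simp only [sub_apply, smul_apply, dotProductCLM_apply, dotProduct_single, mul_one, smul_eq_mul,
    Pi.sub_apply, zero_apply] at hi
  linarith

theorem forall_dotProduct_le_of_gradient_eq (hconv : ConvexOn ℝ Set.univ f)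
    (hf : HasFDerivAt f (dotProductCLM d) x) (hfx : 0 ≤ f x)
    (hX : ∀ i, x i + d i * f x = X i) (hz : z = f x) :
    ∀ s t, f s ≤ t → (X - x) ⬝ᵥ (s - x) ≤ z * (t - z) := by
  intro s t hst
  have hXx : X - x = f x • d := funext fun i => by simp [← hX i, mul_comm]
  have hgrad := hconv.add_fderiv_sub_le (Set.mem_univ x) (Set.mem_univ s) hf
  rw [dotProductCLM_apply] at hgrad
  calc (X - x) ⬝ᵥ (s - x) = f x * (d ⬝ᵥ (s - x)) := by rw [hXx, smul_dotProduct, smul_eq_mul]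
    _ ≤ f x * (f s - f x) := by gcongr; linarith
    _ ≤ z * (t - z) := by rw [hz]; gcongr

end Variational

theorem isMetricProj_iff_real_inner_le_zero {F : Type*} [NormedAddCommGroup F]
    [InnerProductSpace ℝ F] {S : Set F} (hS : Convex ℝ S) {p u : F} :
    IsMetricProj S p u ↔ u ∈ S ∧ ∀ s ∈ S, ⟪p - u, s - u⟫ ≤ 0 := by
  refine and_congr_right fun hu => ?_
  have hbdd : BddBelow (Set.range fun s : S => ‖p - s‖) :=
    ⟨0, by rintro _ ⟨s, rfl⟩; exact norm_nonneg _⟩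
  have : Nonempty S := ⟨⟨u, hu⟩⟩
  rw [← norm_eq_iInf_iff_real_inner_le_zero hS hu]
  simp only [norm_sub_rev _ p]
  constructor
  · intro hmin
    exact le_antisymm (le_ciInf fun s => hmin s s.2) (ciInf_le hbdd ⟨u, hu⟩)
  · intro heq s hs
    exact heq ▸ ciInf_le hbdd ⟨s, hs⟩

namespace EuclideanSpace

variable {𝕜 : Type*} {n : ℕ}

theorem exists_eq_toLp_snoc (w : EuclideanSpace 𝕜 (Fin (n + 1))) :
    ∃ s t, w = WithLp.toLp 2 (Fin.snoc s t) :=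
  ⟨_, _, by rw [Fin.snoc_init_self, WithLp.toLp_ofLp]⟩

theorem forall_toLp_snoc {P : EuclideanSpace 𝕜 (Fin (n + 1)) → Prop} :
    (∀ w, P w) ↔ ∀ s t, P (WithLp.toLp 2 (Fin.snoc s t)) :=
  ⟨fun h _ _ => h _, fun h w => by obtain ⟨s, t, rfl⟩ := exists_eq_toLp_snoc w; exact h s t⟩

theorem inner_eq_dotProduct_castSucc_add_last (v w : EuclideanSpace ℝ (Fin (n + 1))) :
    ⟪v, w⟫ = (fun i : Fin n => v i.castSucc) ⬝ᵥ (fun i : Fin n => w i.castSucc) +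
      v (Fin.last n) * w (Fin.last n) := by
  simp [PiLp.inner_apply, Fin.sum_univ_castSucc, dotProduct, mul_comm]

end EuclideanSpace

section Epigraph

def euclideanEpigraph (n : ℕ) (f : (Fin n → ℝ) → ℝ) : Set (EuclideanSpace ℝ (Fin (n + 1))) :=
  {u | f (fun i => u i.castSucc) ≤ u (Fin.last n)}

variable {n : ℕ} {f : (Fin n → ℝ) → ℝ}

theorem toLp_snoc_mem_euclideanEpigraph {s : Fin n → ℝ} {t : ℝ} :
    WithLp.toLp 2 (Fin.snoc s t) ∈ euclideanEpigraph n f ↔ f s ≤ t := by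
  simp [euclideanEpigraph]

theorem convex_euclideanEpigraph (hf : ConvexOn ℝ Set.univ f) :
    Convex ℝ (euclideanEpigraph n f) := by
  have hlin : IsLinearMap ℝ fun u : EuclideanSpace ℝ (Fin (n + 1)) =>
      ((fun i => u i.castSucc : Fin n → ℝ), u (Fin.last n)) :=
    ⟨fun _ _ => rfl, fun _ _ => rfl⟩
  simpa [euclideanEpigraph, Set.preimage] using hf.convex_epigraph.is_linear_preimage hlin

theorem isMetricProj_euclideanEpigraph_iff (hf : ConvexOn ℝ Set.univ f) (X x : Fin n → ℝ)
    (z : ℝ) :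
    IsMetricProj (euclideanEpigraph n f) (WithLp.toLp 2 (Fin.snoc X 0))
        (WithLp.toLp 2 (Fin.snoc x z)) ↔
      f x ≤ z ∧ ∀ s t, f s ≤ t → (X - x) ⬝ᵥ (s - x) ≤ z * (t - z) := by
  rw [isMetricProj_iff_real_inner_le_zero (convex_euclideanEpigraph hf),
    toLp_snoc_mem_euclideanEpigraph, EuclideanSpace.forall_toLp_snoc]
  refine and_congr_right fun _ => forall₂_congr fun s t => ?_
  rw [toLp_snoc_mem_euclideanEpigraph, EuclideanSpace.inner_eq_dotProduct_castSucc_add_last]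
  simp only [PiLp.sub_apply, Fin.snoc_castSucc, Fin.snoc_last, ← Pi.sub_def]
  constructor <;> intro h hst <;> linarith [h hst]

theorem isMetricProj_euclideanEpigraph_iff_of_hasFDerivAt (hconv : ConvexOn ℝ Set.univ f)
    {d X x : Fin n → ℝ} {z : ℝ} (hf : HasFDerivAt f (dotProductCLM d) x) (hfx : 0 ≤ f x) :
    IsMetricProj (euclideanEpigraph n f) (WithLp.toLp 2 (Fin.snoc X 0))
        (WithLp.toLp 2 (Fin.snoc x z)) ↔
      (∀ i, x i + d i * f x = X i) ∧ z = f x := by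
  rw [isMetricProj_euclideanEpigraph_iff hconv]
  exact ⟨fun ⟨hz, hVI⟩ => gradient_eq_of_forall_dotProduct_le hf hVI hfx hz,
    fun ⟨hX, hz⟩ => ⟨hz.ge, forall_dotProduct_le_of_gradient_eq hconv hf hfx hX hz⟩⟩

end Epigraph

theorem stmt5_general (n : ℕ) (g : MvPolynomial (Fin n) ℝ)
    (hconv : ConvexOn ℝ Set.univ (fun x : Fin n → ℝ => MvPolynomial.eval x g))
    (hnonneg : ∀ x : Fin n → ℝ, 0 ≤ MvPolynomial.eval x g)
    (A : Set (EuclideanSpace ℝ (Fin (n + 1))))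
    (hA : A = {u | MvPolynomial.eval (fun i : Fin n => u i.castSucc) g ≤ u (Fin.last n)})
    (X : Fin n → ℝ)
    (u : EuclideanSpace ℝ (Fin (n + 1))) :
    IsMetricProj A ((WithLp.equiv 2 (Fin (n + 1) → ℝ)).symm (Fin.snoc X 0)) u ↔
      ((∀ i : Fin n,
          u i.castSucc +
            MvPolynomial.eval (fun j : Fin n => u j.castSucc) (MvPolynomial.pderiv i g) *
              MvPolynomial.eval (fun j : Fin n => u j.castSucc) g = X i) ∧
        u (Fin.last n) = MvPolynomial.eval (fun j : Fin n => u j.castSucc) g) := by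
  subst hA
  obtain ⟨x, z, rfl⟩ := EuclideanSpace.exists_eq_toLp_snoc u
  simp only [WithLp.equiv_symm_apply, Fin.snoc_castSucc, Fin.snoc_last]
  exact isMetricProj_euclideanEpigraph_iff_of_hasFDerivAt hconv (hasFDerivAt_eval g x) (hnonneg x)

theorem stmt5 (n : ℕ) (g : MvPolynomial (Fin n) ℝ)
    (hconv : ConvexOn ℝ Set.univ (fun x : Fin n → ℝ => MvPolynomial.eval x g))
    (hnonneg : ∀ x : Fin n → ℝ, 0 ≤ MvPolynomial.eval x g)
    (A : Set (EuclideanSpace ℝ (Fin (n + 1))))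
    (hA : A = {u | MvPolynomial.eval (fun i : Fin n => u i.castSucc) g ≤ u (Fin.last n)})
    (X : Fin n → ℝ) (hX : 0 < MvPolynomial.eval X g)
    (u : EuclideanSpace ℝ (Fin (n + 1))) :
    IsMetricProj A ((WithLp.equiv 2 (Fin (n + 1) → ℝ)).symm (Fin.snoc X 0)) u ↔
      ((∀ i : Fin n,
          u i.castSucc +
            MvPolynomial.eval (fun j : Fin n => u j.castSucc) (MvPolynomial.pderiv i g) *
              MvPolynomial.eval (fun j : Fin n => u j.castSucc) g = X i) ∧
        u (Fin.last n) = MvPolynomial.eval (fun j : Fin n => u j.castSucc) g) :=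
  stmt5_general n g hconv hnonneg A hA X u
end

section
/- Let n ≥ 2 and let g : ℝ^{n−1} × ℝ → ℝ be a polynomial function, written in variables (x, t) with x ∈ ℝ^{n−1} and t ∈ ℝ, such that g(0, 0) = 0 and (∂g/∂x_i)(0, 0) = 0 for i = 1, …, n−1. Suppose the univariate polynomial t ↦ g(0, t) has lowest-degree term c_0 t^d with c_0 ≠ 0 and d ≥ 1, i.e., g(0, t) = c_0 t^d + O(t^{d+1}) as t → 0. Let φ_1, …, φ_{n−1} : ℝ → ℝ be functions analytic at 0 with φ_i(0) = 0, write φ(t) = (φ_1(t), …, φ_{n−1}(t)), and suppose that for all t in a neighborhood of 0 and all i = 1, …, n−1: φ_i(t) + (∂g/∂x_i)(φ(t), t) · g(φ(t), t) = 0. Then φ_i(t) = O(t^{d+1}) as t → 0 for each i = 1, …, n−1. -/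
/-!
Bootstrap on the order of `φ`. Suppose `φ = O(t ^ k)` with `1 ≤ k ≤ d`. Since `g` has no terms
linear in `x` alone, every monomial of `g` involving `x` is `O(t ^ (k + 1))` along `(φ t, t)`, so
`g (φ t, t) = g (0, t) + O(t ^ (k + 1)) = O(t ^ min (k + 1) d)`, while
`∂g/∂xᵢ (φ t, t) = O(t)` because it vanishes at the origin. The equation
`φᵢ = -∂g/∂xᵢ · g` then gives `φᵢ = O(t ^ (k + 1))`; analyticity starts the induction at `k = 1`.
-/

open Filter Asymptotics MvPolynomial Topology

section Curves

variable {𝕜 : Type*} [NormedField 𝕜]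

lemma isBigO_pow_pow_nhds_zero {M N : ℕ} (h : N ≤ M) :
    (fun t : 𝕜 => t ^ M) =O[𝓝 0] fun t => t ^ N := by
  rcases h.lt_or_eq with h | rfl
  · exact (isLittleO_pow_pow h).isBigO
  · exact isBigO_refl _ _

variable {σ : Type*} [Fintype σ] {x : 𝕜 → σ → 𝕜} {e : σ → ℕ}

lemma isBigO_prod_pow_weight (hx : ∀ i, (x · i) =O[𝓝 0] (· ^ e i)) (α : σ →₀ ℕ) :
    (fun t => ∏ i, x t i ^ α i) =O[𝓝 0] (· ^ Finsupp.weight e α) := by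
  have hpow : (fun t : 𝕜 => ∏ i, (t ^ e i) ^ α i) = (· ^ Finsupp.weight e α) := by
    funext t
    simp only [Finsupp.weight_eq_sum, smul_eq_mul, ← Finset.prod_pow_eq_pow_sum, ← pow_mul,
      mul_comm]
  rw [← hpow]
  exact IsBigO.finsetProd fun i _ => (hx i).pow (α i)

lemma isBigO_eval_of_le_weight (hx : ∀ i, (x · i) =O[𝓝 0] (· ^ e i))
    {p : MvPolynomial σ 𝕜} {N : ℕ} (hN : ∀ α ∈ p.support, N ≤ Finsupp.weight e α) :
    (fun t => eval (x t) p) =O[𝓝 0] (· ^ N) := by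
  simp only [eval_eq']
  refine IsBigO.fun_sum fun α hα => ?_
  exact ((isBigO_prod_pow_weight hx α).trans
    (isBigO_pow_pow_nhds_zero (hN α hα))).const_mul_left _

lemma isBigO_eval_sub_eval_of_le_weight (hx : ∀ i, (x · i) =O[𝓝 0] (· ^ e i))
    {y : 𝕜 → σ → 𝕜} {S : Finset σ} (hyS : ∀ t, ∀ i ∈ S, y t i = 0)
    (hxy : ∀ t, ∀ i ∉ S, x t i = y t i) {p : MvPolynomial σ 𝕜} {N : ℕ}
    (hN : ∀ α ∈ p.support, (∃ i ∈ S, α i ≠ 0) → N ≤ Finsupp.weight e α) :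
    (fun t => eval (x t) p - eval (y t) p) =O[𝓝 0] (· ^ N) := by
  simp only [eval_eq', ← Finset.sum_sub_distrib, ← mul_sub]
  refine IsBigO.fun_sum fun α hα => ?_
  by_cases hαS : ∃ i ∈ S, α i ≠ 0
  · obtain ⟨i, hiS, hi⟩ := hαS
    have hy (t : 𝕜) : ∏ j, y t j ^ α j = 0 :=
      Finset.prod_eq_zero (Finset.mem_univ i) (by rw [hyS t i hiS, zero_pow hi])
    simp only [hy, sub_zero]
    exact ((isBigO_prod_pow_weight hx α).trans
      (isBigO_pow_pow_nhds_zero (hN α hα ⟨i, hiS, hi⟩))).const_mul_left _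
  · push Not at hαS
    have hxy' (t : 𝕜) : ∏ j, x t j ^ α j = ∏ j, y t j ^ α j := by
      refine Finset.prod_congr rfl fun j _ => ?_
      by_cases hj : j ∈ S
      · simp [hαS j hj]
      · rw [hxy t j hj]
    simp only [hxy', sub_self, mul_zero]
    exact isBigO_zero _ _

end Curves

lemma MvPolynomial.constantCoeff_pderiv {σ R : Type*} [CommSemiring R] (i : σ)
    (p : MvPolynomial σ R) : constantCoeff (pderiv i p) = coeff (Finsupp.single i 1) p := by
  simp [constantCoeff_eq, coeff_pderiv]

lemma Finsupp.add_one_le_weight_snoc {m k : ℕ} (hk : 1 ≤ k) {α : Fin (m + 1) →₀ ℕ}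
    (hx : ∃ i : Fin m, α i.castSucc ≠ 0) (hα : 2 ≤ α.degree) :
    k + 1 ≤ α.weight (Fin.snoc (fun _ : Fin m => k) 1) := by
  obtain ⟨i, hi⟩ := hx
  rw [Finsupp.degree_eq_sum, Fin.sum_univ_castSucc] at hα
  rw [Finsupp.weight_eq_sum, Fin.sum_univ_castSucc]
  simp only [Fin.snoc_castSucc, Fin.snoc_last, smul_eq_mul, mul_one, ← Finset.sum_mul]
  have hs : 1 ≤ ∑ j : Fin m, α j.castSucc :=
    (Nat.one_le_iff_ne_zero.mpr hi).trans
      (Finset.single_le_sum (f := fun j : Fin m => α j.castSucc) (by simp) (Finset.mem_univ i))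
  nlinarith

section Bootstrap

variable {𝕜 : Type*} [NormedField 𝕜] {m : ℕ} {φ : Fin m → 𝕜 → 𝕜}

lemma isBigO_snoc_apply {k : ℕ} (hφ : ∀ j, φ j =O[𝓝 0] (· ^ k)) (i : Fin (m + 1)) :
    (fun t => (Fin.snoc (fun j => φ j t) t : Fin (m + 1) → 𝕜) i) =O[𝓝 0]
      (· ^ (Fin.snoc (fun _ : Fin m => k) 1 : Fin (m + 1) → ℕ) i) := by
  induction i using Fin.lastCases with
  | last => simpa using isBigO_refl (fun t : 𝕜 => t) (𝓝 0)
  | cast j => simpa using hφ j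

lemma isBigO_eval_snoc_of_constantCoeff_eq_zero (hφ : ∀ j, φ j =O[𝓝 0] (· ^ 1))
    {p : MvPolynomial (Fin (m + 1)) 𝕜} (hp : constantCoeff p = 0) :
    (fun t => eval (Fin.snoc (fun j => φ j t) t) p) =O[𝓝 0] (· ^ 1) := by
  refine isBigO_eval_of_le_weight (isBigO_snoc_apply hφ) fun α hα => ?_
  obtain ⟨i, hi⟩ : ∃ i, α i ≠ 0 := by
    by_contra! h
    obtain rfl : α = 0 := Finsupp.ext h
    exact mem_support_iff.mp hα (by rwa [← constantCoeff_eq])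
  refine le_trans ?_ (Finsupp.le_weight_of_ne_zero' _ hi)
  induction i using Fin.lastCases <;> simp

lemma isBigO_eval_snoc_sub_eval_snoc_zero {g : MvPolynomial (Fin (m + 1)) 𝕜}
    (hlin : ∀ i : Fin m, coeff (Finsupp.single i.castSucc 1) g = 0) {k : ℕ} (hk : 1 ≤ k)
    (hφ : ∀ j, φ j =O[𝓝 0] (· ^ k)) :
    (fun t => eval (Fin.snoc (fun j => φ j t) t) g - eval (Fin.snoc (fun _ : Fin m => 0) t) g)
      =O[𝓝 0] (· ^ (k + 1)) := by
  refine isBigO_eval_sub_eval_of_le_weight (isBigO_snoc_apply hφ) (S := {Fin.last m}ᶜ)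
    ?_ ?_ fun α hα hαS => ?_
  · intro t i hi
    obtain ⟨j, rfl⟩ := Fin.exists_castSucc_eq.mpr (by simpa using hi)
    simp
  · intro t i hi
    obtain rfl : i = Fin.last m := by simpa using hi
    simp
  obtain ⟨i, hi, hαi⟩ := hαS
  obtain ⟨i, rfl⟩ := Fin.exists_castSucc_eq.mpr (by simpa using hi)
  refine Finsupp.add_one_le_weight_snoc hk ⟨i, hαi⟩ ?_
  by_contra! hdeg
  have hpos : 0 < α.degree := (Nat.pos_of_ne_zero hαi).trans_le (Finsupp.le_degree _ α)
  obtain ⟨a, rfl⟩ : α ∈ Set.range (Finsupp.single · 1) := by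
    rw [Finsupp.range_single_one]; exact (by omega : α.degree = 1)
  obtain rfl : a = i.castSucc := by
    by_contra ha
    exact hαi (Finsupp.single_eq_of_ne (Ne.symm ha))
  exact mem_support_iff.mp hα (hlin i)

lemma isBigO_pow_succ_of_isBigO_pow {g : MvPolynomial (Fin (m + 1)) 𝕜} {d k : ℕ}
    (hlin : ∀ i : Fin m, coeff (Finsupp.single i.castSucc 1) g = 0)
    (hg0 : (fun t => eval (Fin.snoc (fun _ : Fin m => 0) t) g) =O[𝓝 0] (· ^ d))
    (heq : ∀ᶠ t in 𝓝 0, ∀ i : Fin m,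
      φ i t + eval (Fin.snoc (fun j => φ j t) t) (pderiv i.castSucc g) *
        eval (Fin.snoc (fun j => φ j t) t) g = 0)
    (hk : 1 ≤ k) (hkd : k ≤ d) (hφ : ∀ j, φ j =O[𝓝 0] (· ^ k)) (i : Fin m) :
    φ i =O[𝓝 0] (· ^ (k + 1)) := by
  have hpderiv : (fun t => eval (Fin.snoc (fun j => φ j t) t) (pderiv i.castSucc g))
      =O[𝓝 0] (· ^ 1) :=
    isBigO_eval_snoc_of_constantCoeff_eq_zero
      (fun j => (hφ j).trans (isBigO_pow_pow_nhds_zero hk)) (by rw [constantCoeff_pderiv, hlin])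
  have hg : (fun t => eval (Fin.snoc (fun j => φ j t) t) g) =O[𝓝 0] (· ^ min (k + 1) d) :=
    (((isBigO_eval_snoc_sub_eval_snoc_zero hlin hk hφ).trans
        (isBigO_pow_pow_nhds_zero (min_le_left _ _))).add
      (hg0.trans (isBigO_pow_pow_nhds_zero (min_le_right _ _)))).congr_left
      fun t => sub_add_cancel _ _
  have hprod := (hpderiv.mul hg).neg_left
  simp only [← pow_add] at hprod
  exact (hprod.trans (isBigO_pow_pow_nhds_zero (by omega))).congr'
    (heq.mono fun t ht => (eq_neg_of_add_eq_zero_left (ht i)).symm) EventuallyEq.rfl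

end Bootstrap

theorem stmt7_general (m : ℕ) (g : MvPolynomial (Fin (m + 1)) ℝ)
    (hd00 : ∀ i : Fin m,
      MvPolynomial.eval (Fin.snoc (fun _ : Fin m => (0 : ℝ)) 0)
        (MvPolynomial.pderiv i.castSucc g) = 0)
    (c₀ : ℝ) (d : ℕ)
    (hlow : (fun t : ℝ =>
        MvPolynomial.eval (Fin.snoc (fun _ : Fin m => (0 : ℝ)) t) g - c₀ * t ^ d)
      =O[nhds 0] fun t : ℝ => t ^ (d + 1))
    (φ : Fin m → ℝ → ℝ) (hφa : ∀ i, AnalyticAt ℝ (φ i) 0) (hφ0 : ∀ i, φ i 0 = 0)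
    (heq : ∀ᶠ t in nhds (0 : ℝ), ∀ i : Fin m,
      φ i t +
        MvPolynomial.eval (Fin.snoc (fun j : Fin m => φ j t) t)
            (MvPolynomial.pderiv i.castSucc g) *
          MvPolynomial.eval (Fin.snoc (fun j : Fin m => φ j t) t) g = 0) :
    ∀ i : Fin m, (φ i) =O[nhds (0 : ℝ)] fun t : ℝ => t ^ (d + 1) := by
  have hlin (i : Fin m) : coeff (Finsupp.single i.castSucc 1) g = 0 := by
    rw [← constantCoeff_pderiv, ← eval_zero, ← hd00 i]
    congr
    ext j
    induction j using Fin.lastCases <;> simp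
  have hg0 : (fun t => eval (Fin.snoc (fun _ : Fin m => (0 : ℝ)) t) g) =O[𝓝 0] (· ^ d) :=
    ((hlow.trans (isBigO_pow_pow_nhds_zero d.le_succ)).add
      ((isBigO_refl _ _).const_mul_left c₀)).congr_left fun t => sub_add_cancel _ _
  have hφ1 (i : Fin m) : φ i =O[𝓝 0] (· ^ 1) := by
    simpa [hφ0 i] using (hφa i).differentiableAt.isBigO_sub
  suffices ∀ k ≤ d, ∀ i, φ i =O[𝓝 0] (· ^ (k + 1)) from this d le_rfl
  intro k hkd
  induction k with
  | zero => exact hφ1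
  | succ k ih => exact isBigO_pow_succ_of_isBigO_pow hlin hg0 heq (by omega) hkd (ih (by omega))

theorem stmt7 (m : ℕ) (hm : 1 ≤ m) (g : MvPolynomial (Fin (m + 1)) ℝ)
    (h00 : MvPolynomial.eval (Fin.snoc (fun _ : Fin m => (0 : ℝ)) 0) g = 0)
    (hd00 : ∀ i : Fin m,
      MvPolynomial.eval (Fin.snoc (fun _ : Fin m => (0 : ℝ)) 0)
        (MvPolynomial.pderiv i.castSucc g) = 0)
    (c₀ : ℝ) (hc₀ : c₀ ≠ 0) (d : ℕ) (hd : 1 ≤ d)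
    (hlow : (fun t : ℝ =>
        MvPolynomial.eval (Fin.snoc (fun _ : Fin m => (0 : ℝ)) t) g - c₀ * t ^ d)
      =O[nhds 0] fun t : ℝ => t ^ (d + 1))
    (φ : Fin m → ℝ → ℝ) (hφa : ∀ i, AnalyticAt ℝ (φ i) 0) (hφ0 : ∀ i, φ i 0 = 0)
    (heq : ∀ᶠ t in nhds (0 : ℝ), ∀ i : Fin m,
      φ i t +
        MvPolynomial.eval (Fin.snoc (fun j : Fin m => φ j t) t)
            (MvPolynomial.pderiv i.castSucc g) *
          MvPolynomial.eval (Fin.snoc (fun j : Fin m => φ j t) t) g = 0) :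
    ∀ i : Fin m, (φ i) =O[nhds (0 : ℝ)] fun t : ℝ => t ^ (d + 1) :=
  stmt7_general m g hd00 c₀ d hlow φ hφa hφ0 heq
end

section
/- Let f_1, f_2 : ℝ² → ℝ be convex polynomial functions with f_1(0,0) = f_2(0,0) = 0, let A = {(x, y, z) ∈ ℝ³ : z ≥ f_1(x, y) and z ≥ f_2(x, y)}, and assume A ∩ {(x, y, 0) : (x, y) ∈ ℝ²} = {(0, 0, 0)}. Define A̅_1 = {(x, y, z) : z = f_1(x, y) > f_2(x, y)}, A̅_2 = {(x, y, z) : z = f_2(x, y) > f_1(x, y)}, and for i = 1, 2 define Ψ_i : ℝ² → ℝ² by Ψ_i(x, y) = (x + (∂f_i/∂x)(x, y)·f_i(x, y), y + (∂f_i/∂y)(x, y)·f_i(x, y)). Then: (i) for every (x, y) ∈ ℝ² with f_1(x, y) > f_2(x, y), writing (X, Y) = Ψ_1(x, y), the metric projection P_A(X, Y, 0) belongs to A̅_1; (ii) for every (x, y) ∈ ℝ² with f_2(x, y) > f_1(x, y), writing (X, Y) = Ψ_2(x, y), the metric projection P_A(X, Y, 0) belongs to A̅_2. -/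
/-- The point (a, b, c) of Euclidean 3-space. -/
noncomputable def e3 (a b c : ℝ) : EuclideanSpace ℝ (Fin 3) :=
  (WithLp.equiv 2 (Fin 3 → ℝ)).symm ![a, b, c]

/-!
At a point where `f > g`, the point `q = (x, y, f(x, y))` lies in `A`, and the point
`p = (Ψ_f(x, y), 0)` equals `q + f(x, y) • (∇f(x, y), -1)`. By convexity, `A` lies above the
tangent plane of the graph of `f` at `q`, whose downward normal is `(∇f(x, y), -1)`; so
`⟪s - q, p - q⟫ ≤ 0` for all `s ∈ A` as soon as `f(x, y) ≥ 0`, and that inequality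
characterises `q` as the metric projection of `p`. Finally `f(x, y) ≥ 0`: otherwise `(x, y, 0)`
would be a point of `A` in the plane `z = 0` other than the origin, as `f(0) = 0`.
-/

open MvPolynomial

section

variable {σ : Type*} [Fintype σ]

theorem MvPolynomial.hasDerivAt_eval_add_smul (f : MvPolynomial σ ℝ) (u d : σ → ℝ) (t : ℝ) :
    HasDerivAt (fun t : ℝ => eval (u + t • d) f)
      (∑ i, d i * eval (u + t • d) (pderiv i f)) t := by
  classical
  induction f using MvPolynomial.induction_on with
  | C a => simpa using hasDerivAt_const t a
  | add p q hp hq =>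
    simp only [map_add, mul_add, Finset.sum_add_distrib]
    exact hp.add hq
  | mul_X p n hp =>
    have hX : HasDerivAt (fun t : ℝ => u n + t * d n) (d n) t := by
      simpa using ((hasDerivAt_id t).mul_const (d n)).const_add (u n)
    simp only [eval_mul, eval_X, Pi.add_apply, Pi.smul_apply, smul_eq_mul]
    refine (hp.mul hX).congr_deriv (Eq.symm ?_)
    calc _ = ∑ i, (d i * eval (u + t • d) (pderiv i p) * (u n + t * d n)
          + eval (u + t • d) p * (Pi.single n (d n) : σ → ℝ) i) := by
          refine Finset.sum_congr rfl fun i _ => ?_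
          rcases eq_or_ne i n with rfl | hin
          · simp [Derivation.leibniz]
            ring
          · simp [Derivation.leibniz, pderiv_X_of_ne hin.symm, hin]
            ring
      _ = _ := by
          rw [Finset.sum_add_distrib, ← Finset.sum_mul, ← Finset.mul_sum]
          simp

theorem ConvexOn.eval_add_sum_sub_mul_pderiv_le {f : MvPolynomial σ ℝ}
    (hf : ConvexOn ℝ Set.univ (fun v => eval v f)) (u v : σ → ℝ) :
    eval u f + ∑ i, (v i - u i) * eval u (pderiv i f) ≤ eval v f := by
  have hline : ConvexOn ℝ Set.univ (fun t : ℝ => eval (u + t • (v - u)) f) := by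
    have heq : (fun t : ℝ => eval (u + t • (v - u)) f)
        = (fun v => eval v f) ∘ AffineMap.lineMap u v := by
      ext t
      simp only [Function.comp_apply, AffineMap.lineMap_apply_module', add_comm]
    rw [heq]
    simpa only [Set.preimage_univ] using hf.comp_affineMap (AffineMap.lineMap u v)
  have hd := MvPolynomial.hasDerivAt_eval_add_smul f u (v - u) 0
  have hslope := hline.le_slope_of_hasDerivAt (Set.mem_univ 0) (Set.mem_univ 1) one_pos
    (by simpa only [Pi.sub_apply, zero_smul, add_zero] using hd)
  simp only [slope_def_field, one_smul, add_sub_cancel, zero_smul, add_zero, sub_zero, div_one]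
    at hslope
  linarith

end

theorem IsMetricProj.eq_of_inner_sub_le_zero {E : Type*} [NormedAddCommGroup E]
    [InnerProductSpace ℝ E] {S : Set E} {p q w : E} (hw : IsMetricProj S p w) (hq : q ∈ S)
    (hnormal : ∀ s ∈ S, inner ℝ (s - q) (p - q) ≤ 0) : w = q := by
  have hexpand : ‖w - p‖ ^ 2 = ‖w - q‖ ^ 2 - 2 * inner ℝ (w - q) (p - q) + ‖q - p‖ ^ 2 := by
    rw [show w - p = (w - q) - (p - q) by abel, norm_sub_sq_real, norm_sub_rev p q]
  have hle : ‖w - p‖ ≤ ‖q - p‖ := hw.2 q hq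
  have hwq : ‖w - q‖ ^ 2 ≤ 0 := by
    nlinarith [hnormal w hw.1, norm_nonneg (w - p), norm_nonneg (q - p)]
  rw [← sub_eq_zero, ← norm_eq_zero]
  exact pow_eq_zero_iff two_ne_zero |>.mp (le_antisymm hwq (sq_nonneg _))

@[simp] lemma e3_apply_zero (a b c : ℝ) : e3 a b c 0 = a := rfl
@[simp] lemma e3_apply_one (a b c : ℝ) : e3 a b c 1 = b := rfl
@[simp] lemma e3_apply_two (a b c : ℝ) : e3 a b c 2 = c := rfl

def supergraphMax (f g : MvPolynomial (Fin 2) ℝ) : Set (EuclideanSpace ℝ (Fin 3)) :=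
  {p | eval ![p 0, p 1] f ≤ p 2 ∧ eval ![p 0, p 1] g ≤ p 2}

lemma supergraphMax_comm (f g : MvPolynomial (Fin 2) ℝ) :
    supergraphMax f g = supergraphMax g f := by
  ext p; exact and_comm

/-- `Ψ_f(x, y)` of the paper, placed in the plane `z = 0`: the point where the downward normal
line of the graph of `f` at `(x, y, f(x, y))` meets that plane. -/
noncomputable def normalFoot (f : MvPolynomial (Fin 2) ℝ) (x y : ℝ) : EuclideanSpace ℝ (Fin 3) :=
  e3 (x + eval ![x, y] (pderiv 0 f) * eval ![x, y] f)
    (y + eval ![x, y] (pderiv 1 f) * eval ![x, y] f) 0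

theorem inner_sub_normalFoot_le_zero {f : MvPolynomial (Fin 2) ℝ}
    (hf : ConvexOn ℝ Set.univ (fun v => eval v f)) {x y : ℝ} (hz : 0 ≤ eval ![x, y] f)
    {s : EuclideanSpace ℝ (Fin 3)} (hs : eval ![s 0, s 1] f ≤ s 2) :
    inner ℝ (s - e3 x y (eval ![x, y] f)) (normalFoot f x y - e3 x y (eval ![x, y] f)) ≤ 0 := by
  have htangent := hf.eval_add_sum_sub_mul_pderiv_le ![x, y] ![s 0, s 1]
  simp only [Fin.sum_univ_two, Matrix.cons_val_zero, Matrix.cons_val_one] at htangent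
  set z := eval ![x, y] f
  calc inner ℝ (s - e3 x y z) (normalFoot f x y - e3 x y z)
      = z * ((s 0 - x) * eval ![x, y] (pderiv 0 f) + (s 1 - y) * eval ![x, y] (pderiv 1 f)
          - (s 2 - z)) := by
        simp [normalFoot, PiLp.inner_apply, Fin.sum_univ_three]
        ring
    _ ≤ 0 := mul_nonpos_of_nonneg_of_nonpos hz (by linarith)

theorem eval_nonneg_of_supergraphMax_inter_eq_singleton {f g : MvPolynomial (Fin 2) ℝ}
    (hf0 : eval 0 f = 0) (hsingle : supergraphMax f g ∩ {p | p 2 = 0} = {0}) {x y : ℝ}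
    (hlt : eval ![x, y] g < eval ![x, y] f) : 0 ≤ eval ![x, y] f := by
  by_contra! hneg
  have hmem : e3 x y 0 ∈ supergraphMax f g ∩ {p | p 2 = 0} :=
    ⟨⟨by simpa using hneg.le, by simpa using (hlt.trans hneg).le⟩, rfl⟩
  rw [hsingle, Set.mem_singleton_iff] at hmem
  have hxy : ![x, y] = 0 := by
    ext i; fin_cases i
    · simpa using congrArg (· 0) hmem
    · simpa using congrArg (· 1) hmem
  rw [hxy, hf0] at hneg
  exact hneg.false

theorem IsMetricProj.eq_graph_of_supergraphMax_normalFoot {f g : MvPolynomial (Fin 2) ℝ}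
    (hf : ConvexOn ℝ Set.univ (fun v => eval v f)) (hf0 : eval 0 f = 0)
    (hsingle : supergraphMax f g ∩ {p | p 2 = 0} = {0}) {x y : ℝ}
    (hlt : eval ![x, y] g < eval ![x, y] f) {w : EuclideanSpace ℝ (Fin 3)}
    (hw : IsMetricProj (supergraphMax f g) (normalFoot f x y) w) :
    w = e3 x y (eval ![x, y] f) :=
  have hz := eval_nonneg_of_supergraphMax_inter_eq_singleton hf0 hsingle hlt
  hw.eq_of_inner_sub_le_zero (by simpa [supergraphMax] using hlt.le)
    fun _ hs => inner_sub_normalFoot_le_zero hf hz hs.1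

theorem stmt12 (f₁ f₂ : MvPolynomial (Fin 2) ℝ)
    (hconv₁ : ConvexOn ℝ Set.univ (fun v : Fin 2 → ℝ => MvPolynomial.eval v f₁))
    (hconv₂ : ConvexOn ℝ Set.univ (fun v : Fin 2 → ℝ => MvPolynomial.eval v f₂))
    (h₁0 : MvPolynomial.eval (0 : Fin 2 → ℝ) f₁ = 0)
    (h₂0 : MvPolynomial.eval (0 : Fin 2 → ℝ) f₂ = 0)
    (A : Set (EuclideanSpace ℝ (Fin 3)))
    (hA : A = {p | MvPolynomial.eval ![p 0, p 1] f₁ ≤ p 2 ∧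
                   MvPolynomial.eval ![p 0, p 1] f₂ ≤ p 2})
    (hsingle : A ∩ {p : EuclideanSpace ℝ (Fin 3) | p 2 = 0} = {0})
    (A₁ A₂ : Set (EuclideanSpace ℝ (Fin 3)))
    (hA₁ : A₁ = {p | p 2 = MvPolynomial.eval ![p 0, p 1] f₁ ∧
                     MvPolynomial.eval ![p 0, p 1] f₂ < MvPolynomial.eval ![p 0, p 1] f₁})
    (hA₂ : A₂ = {p | p 2 = MvPolynomial.eval ![p 0, p 1] f₂ ∧
                     MvPolynomial.eval ![p 0, p 1] f₁ < MvPolynomial.eval ![p 0, p 1] f₂}) :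
    (∀ x y : ℝ, MvPolynomial.eval ![x, y] f₂ < MvPolynomial.eval ![x, y] f₁ →
      ∀ w, IsMetricProj A
        (e3 (x + MvPolynomial.eval ![x, y] (MvPolynomial.pderiv 0 f₁) *
              MvPolynomial.eval ![x, y] f₁)
            (y + MvPolynomial.eval ![x, y] (MvPolynomial.pderiv 1 f₁) *
              MvPolynomial.eval ![x, y] f₁)
            0) w → w ∈ A₁) ∧
    (∀ x y : ℝ, MvPolynomial.eval ![x, y] f₁ < MvPolynomial.eval ![x, y] f₂ →
      ∀ w, IsMetricProj A
        (e3 (x + MvPolynomial.eval ![x, y] (MvPolynomial.pderiv 0 f₂) *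
              MvPolynomial.eval ![x, y] f₂)
            (y + MvPolynomial.eval ![x, y] (MvPolynomial.pderiv 1 f₂) *
              MvPolynomial.eval ![x, y] f₂)
            0) w → w ∈ A₂) := by
  subst hA hA₁ hA₂
  constructor
  · intro x y hlt w hw
    obtain rfl := hw.eq_graph_of_supergraphMax_normalFoot hconv₁ h₁0 hsingle hlt
    simpa using hlt
  · intro x y hlt w hw
    have hcomm : supergraphMax f₁ f₂ = supergraphMax f₂ f₁ := supergraphMax_comm f₁ f₂
    unfold supergraphMax at hcomm
    rw [hcomm] at hsingle hw
    obtain rfl := hw.eq_graph_of_supergraphMax_normalFoot hconv₂ h₂0 hsingle hlt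
    simpa using hlt
end

section
/- Let g : ℝ^n → ℝ be a convex polynomial function with g(0) = 0 and g(x) > 0 for all x ≠ 0, let A = {(x, z) ∈ ℝ^n × ℝ : z ≥ g(x)} and B = {(x, 0) : x ∈ ℝ^n} ⊆ ℝ^{n+1}. Suppose there exist C > 0, a natural number d ≥ 2, and ε > 0 such that g(x)² ≥ C‖x‖^{2d} for all x ∈ ℝ^n with ‖x‖ ≤ ε. Let {a_k} and {b_k} be sequences in ℝ^{n+1} with b_k = P_B(a_k) and a_{k+1} = P_A(b_k) for all k, and suppose ‖b_0‖ ≤ ε. Then limsup_{k→∞} ((d−1)C)^{1/(2d−2)} · k^{1/(2d−2)} · ‖b_k‖ ≤ 1; in particular ‖b_k‖ = O(k^{−1/(2d−2)}) as k → ∞. -/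
/-!
Since `0 ∈ A ∩ B`, the Pythagorean inequality for projections onto convex sets gives
`‖b (k + 1)‖² ≤ ‖a (k + 1)‖² ≤ ‖b k‖² - ‖a (k + 1) - b k‖²`. At `x = (b k).init`, the tangent
plane of the convex function `g` shows that `(x, 0)` is at distance at least
`g x / (1 + ‖∇g x‖)` from the epigraph `A`, so the growth condition turns this into the
recursion `s (k + 1) ≤ s k - γ k * s k ^ d` for `s k = ‖b k‖²` and
`γ k = C / (1 + ‖∇g x‖)²`. A uniform bound on `∇g` near `0` forces `s k → 0`; then `γ k → C`
because `∇g 0 = 0`. Finally Bernoulli's inequality shows that `(s k)^{-(d-1)}` grows by at least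
`(d - 1) γ k` per step, which gives `(d - 1) C k s k ^ (d - 1) ≤ 1 + o(1)`.
-/

open Filter

open Set Topology

section MetricProj

variable {E : Type*} [NormedAddCommGroup E] [InnerProductSpace ℝ E] {S : Set E} {p u : E}

theorem IsMetricProj.inner_sub_nonpos (hS : Convex ℝ S) (h : IsMetricProj S p u) {s : E}
    (hs : s ∈ S) : inner ℝ (p - u) (s - u) ≤ 0 := by
  have : Nonempty S := ⟨⟨u, h.1⟩⟩
  refine (norm_eq_iInf_iff_real_inner_le_zero hS h.1).1 (le_antisymm ?_ ?_) s hs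
  · exact le_ciInf fun w => by simpa only [norm_sub_rev p] using h.2 w w.2
  · exact ciInf_le ⟨0, forall_mem_range.2 fun _ => norm_nonneg _⟩ (⟨u, h.1⟩ : S)

theorem IsMetricProj.norm_sub_sq_add_norm_sub_sq_le (hS : Convex ℝ S) (h : IsMetricProj S p u)
    {q : E} (hq : q ∈ S) : ‖u - q‖ ^ 2 + ‖u - p‖ ^ 2 ≤ ‖p - q‖ ^ 2 := by
  have hinner := h.inner_sub_nonpos hS hq
  have hsplit : ‖p - q‖ ^ 2 = ‖p - u‖ ^ 2 - 2 * inner ℝ (p - u) (q - u) + ‖u - q‖ ^ 2 := by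
    rw [← sub_add_sub_cancel p u q, norm_add_sq_real, ← neg_sub q u, inner_neg_right]; ring
  rw [norm_sub_rev u p]
  linarith

theorem IsMetricProj.norm_le (hS : Convex ℝ S) (h0 : (0 : E) ∈ S) (h : IsMetricProj S p u) :
    ‖u‖ ≤ ‖p‖ := by
  have := h.norm_sub_sq_add_norm_sub_sq_le hS h0
  simp only [sub_zero] at this
  nlinarith [norm_nonneg u, norm_nonneg p, sq_nonneg ‖u - p‖]

theorem antitone_norm_of_isMetricProj {A B : Set E} (hA : Convex ℝ A) (hB : Convex ℝ B)
    (hA0 : (0 : E) ∈ A) (hB0 : (0 : E) ∈ B) {a b : ℕ → E}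
    (hb : ∀ k, IsMetricProj B (a k) (b k)) (ha : ∀ k, IsMetricProj A (b k) (a (k + 1))) :
    Antitone fun k => ‖b k‖ :=
  antitone_nat_of_succ_le fun k => ((hb (k + 1)).norm_le hB hB0).trans ((ha k).norm_le hA hA0)

end MetricProj

section ConvexTangent

variable {E : Type*} [NormedAddCommGroup E] [NormedSpace ℝ E] {f : E → ℝ} {x : E}

theorem ConvexOn.fderiv_apply_sub_le (hf : ConvexOn ℝ univ f) (hfx : DifferentiableAt ℝ f x)
    (y : E) : fderiv ℝ f x (y - x) ≤ f y - f x := by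
  have hfx' : HasFDerivAt f (fderiv ℝ f x) (AffineMap.lineMap x y (0 : ℝ)) := by
    rw [AffineMap.lineMap_apply_zero]; exact hfx.hasFDerivAt
  have hline : HasDerivAt (f ∘ AffineMap.lineMap (k := ℝ) x y) (fderiv ℝ f x (y - x)) 0 :=
    hfx'.comp_hasDerivAt 0 AffineMap.hasDerivAt_lineMap
  simpa [slope_def_field] using
    (hf.comp_affineMap (AffineMap.lineMap x y)).le_slope_of_hasDerivAt (mem_univ 0) (mem_univ 1)
      zero_lt_one hline

theorem ConvexOn.le_add_norm_fderiv_mul_norm_sub (hf : ConvexOn ℝ univ f)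
    (hfx : DifferentiableAt ℝ f x) (y : E) : f x ≤ f y + ‖fderiv ℝ f x‖ * ‖y - x‖ := by
  have := (neg_le_abs _).trans ((fderiv ℝ f x).le_opNorm (y - x))
  linarith [hf.fderiv_apply_sub_le hfx y]

end ConvexTangent

theorem IsLocalMin.tendsto_div_one_add_norm_fderiv_sq {E : Type*} [NormedAddCommGroup E]
    [NormedSpace ℝ E] {f : E → ℝ} {x₀ : E} (hmin : IsLocalMin f x₀) (hf : ContDiff ℝ 1 f)
    {x : ℕ → E} (hx : Tendsto x atTop (𝓝 x₀)) (C : ℝ) :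
    Tendsto (fun k => C / (1 + ‖fderiv ℝ f (x k)‖) ^ 2) atTop (𝓝 C) := by
  have h := tendsto_const_nhds.div
    (((((hf.continuous_fderiv one_ne_zero).tendsto x₀).comp hx).norm.const_add 1).pow 2)
    (by positivity : (1 + ‖fderiv ℝ f x₀‖) ^ 2 ≠ 0) (a := C)
  rwa [hmin.fderiv_eq_zero, norm_zero, add_zero, one_pow, div_one] at h

theorem one_add_mul_le_inv_one_sub_pow {u : ℝ} (hu₀ : 0 ≤ u) (hu₁ : u < 1) (m : ℕ) :
    1 + m * u ≤ ((1 - u) ^ m)⁻¹ := by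
  have hpos : 0 < 1 - u := by linarith
  calc 1 + m * u ≤ 1 + m * (u / (1 - u)) := by gcongr; exact le_div_self hu₀ hpos (by linarith)
    _ ≤ (1 + u / (1 - u)) ^ m := one_add_mul_le_pow (by linarith [div_nonneg hu₀ hpos.le]) m
    _ = ((1 - u) ^ m)⁻¹ := by rw [← inv_pow]; congr 1; field_simp; ring

theorem inv_pow_add_mul_le_inv_pow_of_le_sub {x y γ : ℝ} {m : ℕ} (hx₀ : 0 ≤ x) (hy : 0 < y)
    (hγ : 0 ≤ γ) (hyx : y ≤ x - γ * x ^ (m + 1)) : (x ^ m)⁻¹ + m * γ ≤ (y ^ m)⁻¹ := by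
  have hx : 0 < x := by nlinarith [mul_nonneg hγ (pow_nonneg hx₀ (m + 1))]
  set u := γ * x ^ m with hu
  have hy_le : y ≤ x * (1 - u) := by rw [pow_succ] at hyx; linarith
  have hu₁ : u < 1 := by nlinarith
  calc (x ^ m)⁻¹ + m * γ = (x ^ m)⁻¹ * (1 + m * u) := by rw [hu]; field_simp
    _ ≤ (x ^ m)⁻¹ * ((1 - u) ^ m)⁻¹ := by
        gcongr; exact one_add_mul_le_inv_one_sub_pow (by positivity) hu₁ m
    _ = ((x * (1 - u)) ^ m)⁻¹ := by rw [mul_pow, mul_inv]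
    _ ≤ (y ^ m)⁻¹ := by gcongr

theorem mul_mul_pow_le_one_of_le_sub {s : ℕ → ℝ} {γ : ℝ} {m : ℕ} (hs : ∀ k, 0 ≤ s k)
    (hγ : 0 ≤ γ) (hrec : ∀ k, s (k + 1) ≤ s k - γ * s k ^ (m + 1)) (k : ℕ) :
    m * γ * k * s k ^ m ≤ 1 := by
  induction k with
  | zero => simp
  | succ k ih =>
    rcases Nat.eq_zero_or_pos m with rfl | hm
    · simp
    rcases (hs (k + 1)).eq_or_lt with hzero | hpos
    · simp [← hzero, zero_pow hm.ne']
    have hsk : 0 < s k := hpos.trans_le <| by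
      linarith [hrec k, mul_nonneg hγ (pow_nonneg (hs k) (m + 1))]
    have hstep := inv_pow_add_mul_le_inv_pow_of_le_sub (hs k) hpos hγ (hrec k)
    have ih' : m * γ * k ≤ (s k ^ m)⁻¹ := by
      rwa [← one_div, le_div_iff₀ (pow_pos hsk m)]
    have : m * γ * (k + 1 : ℕ) ≤ (s (k + 1) ^ m)⁻¹ := by push_cast; linarith
    rwa [← one_div, le_div_iff₀ (pow_pos hpos m)] at this

theorem tendsto_zero_of_le_sub_mul_pow {s γ : ℕ → ℝ} {γ₀ : ℝ} {m : ℕ} (hs : ∀ k, 0 ≤ s k)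
    (hγ₀ : 0 < γ₀) (hγ : ∀ k, γ₀ ≤ γ k) (hrec : ∀ k, s (k + 1) ≤ s k - γ k * s k ^ (m + 1)) :
    Tendsto s atTop (𝓝 0) := by
  have hrec₀ (k) : s (k + 1) ≤ s k - γ₀ * s k ^ (m + 1) := by
    linarith [hrec k, mul_le_mul_of_nonneg_right (hγ k) (pow_nonneg (hs k) (m + 1))]
  have hanti : Antitone s := antitone_nat_of_succ_le fun k => by
    linarith [hrec₀ k, mul_nonneg hγ₀.le (pow_nonneg (hs k) (m + 1))]
  have hlim := tendsto_atTop_ciInf hanti ⟨0, forall_mem_range.2 hs⟩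
  set l := ⨅ k, s k
  have hl : l ≤ l - γ₀ * l ^ (m + 1) :=
    le_of_tendsto_of_tendsto' (hlim.comp (tendsto_add_atTop_nat 1))
      (hlim.sub (tendsto_const_nhds.mul (hlim.pow _))) hrec₀
  have hl₀ : l = 0 := by
    have : l ^ (m + 1) ≤ 0 := by nlinarith
    exact pow_eq_zero_iff m.succ_ne_zero |>.1 (le_antisymm this (pow_nonneg (le_ciInf hs) _))
  rwa [hl₀] at hlim

theorem eventually_mul_mul_pow_le_of_le_sub {s γ : ℕ → ℝ} {γ₀ : ℝ} {m : ℕ} (hs : ∀ k, 0 ≤ s k)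
    (hγ₀ : 0 < γ₀) (hγ : Tendsto γ atTop (𝓝 γ₀))
    (hrec : ∀ k, s (k + 1) ≤ s k - γ k * s k ^ (m + 1)) {c : ℝ} (hc : 1 < c) :
    ∀ᶠ k : ℕ in atTop, m * γ₀ * k * s k ^ m ≤ c := by
  -- the rate `γ₀ / √c` holds from some `K` on, and `k ≤ √c * (k - K)` for large `k`
  set c' := √c
  have hc' : 1 < c' := by rw [Real.lt_sqrt zero_le_one]; simpa using hc
  obtain ⟨K, hK⟩ := eventually_atTop.1 <|
    hγ.eventually_const_lt (div_lt_self hγ₀ hc' : γ₀ / c' < γ₀)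
  have hrecK : ∀ j, s (K + j + 1) ≤ s (K + j) - γ₀ / c' * s (K + j) ^ (m + 1) := fun j => by
    have := mul_le_mul_of_nonneg_right (hK (K + j) (Nat.le_add_right K j)).le
      (pow_nonneg (hs (K + j)) (m + 1))
    linarith [hrec (K + j)]
  filter_upwards [eventually_ge_atTop K,
    tendsto_natCast_atTop_atTop.eventually_ge_atTop (c' * K / (c' - 1))] with k hkK hk
  obtain ⟨j, rfl⟩ := Nat.exists_eq_add_of_le hkK
  have hdecay := mul_mul_pow_le_one_of_le_sub (fun j => hs (K + j)) (by positivity) hrecK j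
  have hkj : ((K + j : ℕ) : ℝ) ≤ c' * j := by
    rw [div_le_iff₀ (by linarith)] at hk; push_cast at hk ⊢; nlinarith
  calc m * γ₀ * (K + j : ℕ) * s (K + j) ^ m ≤ m * γ₀ * (c' * j) * s (K + j) ^ m := by
        have := hs (K + j); gcongr
    _ = c' ^ 2 * (m * (γ₀ / c') * j * s (K + j) ^ m) := by field_simp
    _ ≤ c' ^ 2 * 1 := by gcongr
    _ = c := by rw [mul_one, Real.sq_sqrt (by linarith)]

theorem limsup_le_one_and_isBigO_of_eventually_le {r : ℕ → ℝ} {κ p : ℝ} (hr : ∀ k, 0 ≤ r k)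
    (hκ : 0 < κ) (hp : 0 < p) (h : ∀ c > 1, ∀ᶠ k : ℕ in atTop, κ * k * r k ^ p ≤ c) :
    limsup (fun k : ℕ => κ ^ (1 / p) * (k : ℝ) ^ (1 / p) * r k) atTop ≤ 1 ∧
    ∃ M : ℝ, ∃ K : ℕ, 0 < M ∧ ∀ k ≥ K, r k ≤ M * (k : ℝ) ^ (-(1 / p)) := by
  have hroot : ∀ c > 1, ∀ᶠ k : ℕ in atTop, κ ^ (1 / p) * (k : ℝ) ^ (1 / p) * r k ≤ c := by
    intro c hc
    filter_upwards [h (c ^ p) (Real.one_lt_rpow hc hp)] with k hk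
    have hrp := Real.rpow_nonneg (hr k) p
    have := Real.rpow_le_rpow (by positivity) hk (one_div_pos.2 hp).le
    rwa [Real.mul_rpow (by positivity) hrp, Real.mul_rpow hκ.le (by positivity),
      ← Real.rpow_mul (hr k), ← Real.rpow_mul (by linarith), mul_one_div_cancel hp.ne',
      Real.rpow_one, Real.rpow_one] at this
  refine ⟨le_of_forall_gt_imp_ge_of_dense fun c hc => limsup_le_of_le ?_ (hroot c hc), ?_⟩
  · exact isCoboundedUnder_le_of_le atTop fun k => mul_nonneg (by positivity) (hr k)
  obtain ⟨K, hK⟩ := eventually_atTop.1 ((hroot 2 one_lt_two).and (eventually_gt_atTop 0))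
  refine ⟨2 / κ ^ (1 / p), K, by positivity, fun k hk => ?_⟩
  obtain ⟨hbound, hkpos⟩ := hK k hk
  have hkpos : (0 : ℝ) < k := Nat.cast_pos.2 hkpos
  rw [Real.rpow_neg hkpos.le, ← div_eq_mul_inv, div_div, le_div_iff₀ (by positivity)]
  linarith

section Epigraph

variable {n : ℕ}

-- `Fin n → ℝ` carries the sup norm; the gradient of `f` is measured against it throughout.
theorem norm_init_le (u : EuclideanSpace ℝ (Fin (n + 1))) : ‖Fin.init u‖ ≤ ‖u‖ :=
  pi_norm_le_iff_of_nonneg (norm_nonneg u) |>.2 fun i => PiLp.norm_apply_le u i.castSucc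

theorem norm_toLp_init_of_last_eq_zero {u : EuclideanSpace ℝ (Fin (n + 1))}
    (hu : u (Fin.last n) = 0) : ‖WithLp.toLp 2 (Fin.init u)‖ = ‖u‖ := by
  simp [EuclideanSpace.norm_eq, Fin.sum_univ_castSucc, hu, Fin.init]

theorem last_le_norm_sub {p a : EuclideanSpace ℝ (Fin (n + 1))} (hp : p (Fin.last n) = 0) :
    a (Fin.last n) ≤ ‖a - p‖ := by
  simpa [hp] using (le_abs_self _).trans (PiLp.norm_apply_le (a - p) (Fin.last n))

variable {f : (Fin n → ℝ) → ℝ}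

theorem convex_epigraph_init (hf : ConvexOn ℝ univ f) :
    Convex ℝ {u : EuclideanSpace ℝ (Fin (n + 1)) | f (Fin.init u) ≤ u (Fin.last n)} := by
  have hlin : IsLinearMap ℝ
      fun u : EuclideanSpace ℝ (Fin (n + 1)) => (Fin.init u, u (Fin.last n)) :=
    ⟨fun _ _ => rfl, fun _ _ => rfl⟩
  simpa using hf.convex_epigraph.is_linear_preimage hlin

theorem convex_last_eq_zero : Convex ℝ {u : EuclideanSpace ℝ (Fin (n + 1)) | u (Fin.last n) = 0} :=
  convex_hyperplane ⟨fun _ _ => rfl, fun _ _ => rfl⟩ 0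

theorem le_one_add_norm_fderiv_mul_norm_sub (hf : ConvexOn ℝ univ f)
    {p a : EuclideanSpace ℝ (Fin (n + 1))} (hfp : DifferentiableAt ℝ f (Fin.init p))
    (hp : p (Fin.last n) = 0) (ha : f (Fin.init a) ≤ a (Fin.last n)) :
    f (Fin.init p) ≤ (1 + ‖fderiv ℝ f (Fin.init p)‖) * ‖a - p‖ := by
  have htangent := hf.le_add_norm_fderiv_mul_norm_sub hfp (Fin.init a)
  have hinit : ‖Fin.init a - Fin.init p‖ ≤ ‖a - p‖ := norm_init_le (a - p)
  have hlast := last_le_norm_sub (a := a) hp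
  have := mul_le_mul_of_nonneg_left hinit (norm_nonneg (fderiv ℝ f (Fin.init p)))
  linarith

theorem norm_sq_le_sub_of_isMetricProj (hf : ConvexOn ℝ univ f) (hf0 : f 0 = 0) {C : ℝ} {d : ℕ}
    {p a p' : EuclideanSpace ℝ (Fin (n + 1))} (hfp : DifferentiableAt ℝ f (Fin.init p))
    (hfp₀ : 0 ≤ f (Fin.init p)) (hgrowth : C * ‖p‖ ^ (2 * d) ≤ f (Fin.init p) ^ 2)
    (hp : p (Fin.last n) = 0)
    (ha : IsMetricProj {u : EuclideanSpace ℝ (Fin (n + 1)) | f (Fin.init u) ≤ u (Fin.last n)} p a)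
    (hp' : IsMetricProj {u : EuclideanSpace ℝ (Fin (n + 1)) | u (Fin.last n) = 0} a p') :
    ‖p'‖ ^ 2 ≤ ‖p‖ ^ 2 - C / (1 + ‖fderiv ℝ f (Fin.init p)‖) ^ 2 * (‖p‖ ^ 2) ^ d := by
  have hA := ha.norm_sub_sq_add_norm_sub_sq_le (convex_epigraph_init hf) (q := 0) hf0.le
  have hB := hp'.norm_le convex_last_eq_zero (by simp)
  have hdist := le_one_add_norm_fderiv_mul_norm_sub hf hfp hp ha.1
  have hgap : C / (1 + ‖fderiv ℝ f (Fin.init p)‖) ^ 2 * (‖p‖ ^ 2) ^ d ≤ ‖a - p‖ ^ 2 := by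
    have hdist_sq := pow_le_pow_left₀ hfp₀ hdist 2
    rw [mul_pow] at hdist_sq
    rw [div_mul_eq_mul_div, div_le_iff₀ (by positivity), ← pow_mul]
    linarith
  simp only [sub_zero] at hA
  linarith [pow_le_pow_left₀ (norm_nonneg _) hB 2]

variable {C ε : ℝ} {d : ℕ} {a b : ℕ → EuclideanSpace ℝ (Fin (n + 1))}

theorem norm_le_norm_zero_of_isMetricProj (hf : ConvexOn ℝ univ f) (hf0 : f 0 = 0)
    (hb : ∀ k, IsMetricProj {u : EuclideanSpace ℝ (Fin (n + 1)) | u (Fin.last n) = 0} (a k) (b k))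
    (ha : ∀ k, IsMetricProj {u : EuclideanSpace ℝ (Fin (n + 1)) | f (Fin.init u) ≤ u (Fin.last n)}
      (b k) (a (k + 1)))
    (k : ℕ) : ‖b k‖ ≤ ‖b 0‖ :=
  antitone_norm_of_isMetricProj (convex_epigraph_init hf) convex_last_eq_zero hf0.le (by simp)
    hb ha (Nat.zero_le k)

theorem norm_sq_succ_le_of_isMetricProj (hf : ConvexOn ℝ univ f) (hf0 : f 0 = 0)
    (hf_nonneg : ∀ x, 0 ≤ f x) (hfd : Differentiable ℝ f)
    (hgrowth : ∀ x : EuclideanSpace ℝ (Fin n), ‖x‖ ≤ ε → C * ‖x‖ ^ (2 * d) ≤ f x.ofLp ^ 2)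
    (hb : ∀ k, IsMetricProj {u : EuclideanSpace ℝ (Fin (n + 1)) | u (Fin.last n) = 0} (a k) (b k))
    (ha : ∀ k, IsMetricProj {u : EuclideanSpace ℝ (Fin (n + 1)) | f (Fin.init u) ≤ u (Fin.last n)}
      (b k) (a (k + 1)))
    (hb0 : ‖b 0‖ ≤ ε) (k : ℕ) :
    ‖b (k + 1)‖ ^ 2 ≤
      ‖b k‖ ^ 2 - C / (1 + ‖fderiv ℝ f (Fin.init (b k))‖) ^ 2 * (‖b k‖ ^ 2) ^ d := by
  have hb_last : b k (Fin.last n) = 0 := (hb k).1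
  have hnorm := norm_toLp_init_of_last_eq_zero hb_last
  have hb_le : ‖b k‖ ≤ ε := (norm_le_norm_zero_of_isMetricProj hf hf0 hb ha k).trans hb0
  refine norm_sq_le_sub_of_isMetricProj hf hf0 (hfd _) (hf_nonneg _) ?_ hb_last (ha k) (hb (k + 1))
  simpa [hnorm] using hgrowth _ (hnorm.trans_le hb_le)

theorem tendsto_zero_of_isMetricProj (hf : ConvexOn ℝ univ f) (hf0 : f 0 = 0)
    (hf_nonneg : ∀ x, 0 ≤ f x) (hf_smooth : ContDiff ℝ 1 f) (hC : 0 < C)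
    (hgrowth : ∀ x : EuclideanSpace ℝ (Fin n), ‖x‖ ≤ ε → C * ‖x‖ ^ (2 * (d + 1)) ≤ f x.ofLp ^ 2)
    (hb : ∀ k, IsMetricProj {u : EuclideanSpace ℝ (Fin (n + 1)) | u (Fin.last n) = 0} (a k) (b k))
    (ha : ∀ k, IsMetricProj {u : EuclideanSpace ℝ (Fin (n + 1)) | f (Fin.init u) ≤ u (Fin.last n)}
      (b k) (a (k + 1)))
    (hb0 : ‖b 0‖ ≤ ε) :
    Tendsto b atTop (𝓝 0) := by
  have hb_init (k) : ‖Fin.init (b k)‖ ≤ ε :=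
    (norm_init_le (b k)).trans ((norm_le_norm_zero_of_isMetricProj hf hf0 hb ha k).trans hb0)
  obtain ⟨Λ, hΛ⟩ := (isCompact_closedBall (0 : Fin n → ℝ) ε).exists_bound_of_continuousOn
    (hf_smooth.continuous_fderiv one_ne_zero).continuousOn
  have hfderiv_le (k) : ‖fderiv ℝ f (Fin.init (b k))‖ ≤ Λ :=
    hΛ _ (mem_closedBall_zero_iff.2 (hb_init k))
  have hsq : Tendsto (fun k => ‖b k‖ ^ 2) atTop (𝓝 0) := by
    refine tendsto_zero_of_le_sub_mul_pow (fun k => sq_nonneg _) (γ₀ := C / (1 + Λ) ^ 2) ?_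
      (fun k => ?_) (norm_sq_succ_le_of_isMetricProj hf hf0 hf_nonneg
        (hf_smooth.differentiable one_ne_zero) hgrowth hb ha hb0)
    · have := (norm_nonneg _).trans (hfderiv_le 0); positivity
    · exact div_le_div_of_nonneg_left hC.le (by positivity) (by gcongr; exact hfderiv_le k)
  simpa using (tendsto_zero_iff_norm_tendsto_zero.2 (by simpa using hsq.sqrt))

end Epigraph

theorem stmt15_general (n : ℕ) (g : MvPolynomial (Fin n) ℝ)
    (hconv : ConvexOn ℝ Set.univ (fun x : Fin n → ℝ => MvPolynomial.eval x g))
    (hg0 : MvPolynomial.eval (fun _ : Fin n => (0 : ℝ)) g = 0)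
    (hgpos : ∀ x : Fin n → ℝ, x ≠ 0 → 0 < MvPolynomial.eval x g)
    (A B : Set (EuclideanSpace ℝ (Fin (n + 1))))
    (hA : A = {u | MvPolynomial.eval (fun i : Fin n => u i.castSucc) g ≤ u (Fin.last n)})
    (hB : B = {u : EuclideanSpace ℝ (Fin (n + 1)) | u (Fin.last n) = 0})
    (C : ℝ) (hC : 0 < C) (d : ℕ) (hd : 2 ≤ d) (ε : ℝ)
    (hgrowth : ∀ x : EuclideanSpace ℝ (Fin n), ‖x‖ ≤ ε →
      C * ‖x‖ ^ (2 * d) ≤ (MvPolynomial.eval (fun i => x i) g) ^ 2)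
    (a b : ℕ → EuclideanSpace ℝ (Fin (n + 1)))
    (hb : ∀ k, IsMetricProj B (a k) (b k))
    (ha : ∀ k, IsMetricProj A (b k) (a (k + 1)))
    (hb0 : ‖b 0‖ ≤ ε) :
    Filter.limsup (fun k : ℕ =>
        (((d : ℝ) - 1) * C) ^ (1 / (2 * (d : ℝ) - 2)) *
          (k : ℝ) ^ (1 / (2 * (d : ℝ) - 2)) * ‖b k‖) atTop ≤ 1 ∧
    ∃ M : ℝ, ∃ K : ℕ, 0 < M ∧ ∀ k ≥ K,
      ‖b k‖ ≤ M * (k : ℝ) ^ (-(1 / (2 * (d : ℝ) - 2))) := by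
  obtain ⟨m, rfl⟩ : ∃ m, d = m + 1 := ⟨d - 1, by omega⟩
  have hm : (1 : ℝ) ≤ m := by exact_mod_cast (by omega : 1 ≤ m)
  subst hA hB
  set f : (Fin n → ℝ) → ℝ := fun x => MvPolynomial.eval x g
  have hf0 : f 0 = 0 := hg0
  have hf_nonneg (x) : 0 ≤ f x := by
    rcases eq_or_ne x 0 with rfl | hx
    exacts [hf0.ge, (hgpos x hx).le]
  have hf_smooth : ContDiff ℝ 1 f := (AnalyticOnNhd.eval_mvPolynomial g).contDiff
  have hinit : Tendsto (fun k => Fin.init (b k)) atTop (𝓝 0) :=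
    squeeze_zero_norm (fun k => norm_init_le (b k)) <| tendsto_zero_iff_norm_tendsto_zero.1 <|
      tendsto_zero_of_isMetricProj hconv hf0 hf_nonneg hf_smooth hC hgrowth hb ha hb0
  have hγ := IsLocalMin.tendsto_div_one_add_norm_fderiv_sq
    (.of_forall fun x => hf0 ▸ hf_nonneg x) hf_smooth hinit C
  have hexp : 2 * ((m + 1 : ℕ) : ℝ) - 2 = ((2 * m : ℕ) : ℝ) := by push_cast; ring
  refine limsup_le_one_and_isBigO_of_eventually_le (fun k => norm_nonneg _) ?_ ?_ fun c hc => ?_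
  · push_cast; nlinarith
  · push_cast; linarith
  filter_upwards [eventually_mul_mul_pow_le_of_le_sub (s := fun k => ‖b k‖ ^ 2)
    (fun k => sq_nonneg _) hC hγ (norm_sq_succ_le_of_isMetricProj hconv hf0 hf_nonneg
      (hf_smooth.differentiable one_ne_zero) hgrowth hb ha hb0) hc] with k hk
  rw [hexp, Real.rpow_natCast, pow_mul]
  simpa using hk

theorem stmt15 (n : ℕ) (g : MvPolynomial (Fin n) ℝ)
    (hconv : ConvexOn ℝ Set.univ (fun x : Fin n → ℝ => MvPolynomial.eval x g))
    (hg0 : MvPolynomial.eval (fun _ : Fin n => (0 : ℝ)) g = 0)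
    (hgpos : ∀ x : Fin n → ℝ, x ≠ 0 → 0 < MvPolynomial.eval x g)
    (A B : Set (EuclideanSpace ℝ (Fin (n + 1))))
    (hA : A = {u | MvPolynomial.eval (fun i : Fin n => u i.castSucc) g ≤ u (Fin.last n)})
    (hB : B = {u : EuclideanSpace ℝ (Fin (n + 1)) | u (Fin.last n) = 0})
    (C : ℝ) (hC : 0 < C) (d : ℕ) (hd : 2 ≤ d) (ε : ℝ) (hε : 0 < ε)
    (hgrowth : ∀ x : EuclideanSpace ℝ (Fin n), ‖x‖ ≤ ε →
      C * ‖x‖ ^ (2 * d) ≤ (MvPolynomial.eval (fun i => x i) g) ^ 2)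
    (a b : ℕ → EuclideanSpace ℝ (Fin (n + 1)))
    (hb : ∀ k, IsMetricProj B (a k) (b k))
    (ha : ∀ k, IsMetricProj A (b k) (a (k + 1)))
    (hb0 : ‖b 0‖ ≤ ε) :
    Filter.limsup (fun k : ℕ =>
        (((d : ℝ) - 1) * C) ^ (1 / (2 * (d : ℝ) - 2)) *
          (k : ℝ) ^ (1 / (2 * (d : ℝ) - 2)) * ‖b k‖) atTop ≤ 1 ∧
    ∃ M : ℝ, ∃ K : ℕ, 0 < M ∧ ∀ k ≥ K,
      ‖b k‖ ≤ M * (k : ℝ) ^ (-(1 / (2 * (d : ℝ) - 2))) :=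
  stmt15_general n g hconv hg0 hgpos A B hA hB C hC d hd ε hgrowth a b hb ha hb0
end

section
/- There exists ε_0 > 0 such that for every ε with 0 < ε ≤ ε_0 the following holds: if real numbers x, y, X, Y satisfy X = x(1 + 2(x² + y⁴)) and Y = y(1 + 4y²(x² + y⁴)), and 0 < X < Y² ≤ ε, then 0 < x < y² ≤ ε. -/
theorem stmt18 :
    ∃ ε₀ : ℝ, 0 < ε₀ ∧ ∀ ε : ℝ, 0 < ε → ε ≤ ε₀ →
      ∀ x y X Y : ℝ,
        X = x * (1 + 2 * (x ^ 2 + y ^ 4)) →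
        Y = y * (1 + 4 * y ^ 2 * (x ^ 2 + y ^ 4)) →
        0 < X → X < Y ^ 2 → Y ^ 2 ≤ ε →
        0 < x ∧ x < y ^ 2 ∧ y ^ 2 ≤ ε := by
  refine ⟨1/10, by norm_num, fun ε hε hε0 x y X Y hX hY hXpos hXY hYε => ?_⟩
  have hs : (0:ℝ) ≤ x^2 + y^4 := by positivity
  have hx : 0 < x := by nlinarith
  have hY2 : Y^2 = y^2 * (1 + 4*y^2*(x^2+y^4))^2 := by rw [hY]; ring
  have hy2Y : y^2 ≤ Y^2 := by
    nlinarith [mul_nonneg (sq_nonneg (y^2)) hs, sq_nonneg (y^3*(x^2+y^4))]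
  have hy2 : y^2 ≤ ε := le_trans hy2Y hYε
  refine ⟨hx, ?_, hy2⟩
  have hxX : x ≤ X := by nlinarith
  have hxε : x ≤ ε := le_trans hxX (le_trans (le_of_lt hXY) hYε)
  have hε1 : ε ≤ 1/10 := hε0
  have hy21 : y^2 ≤ 1/10 := le_trans hy2 hε1
  have hx1 : x ≤ 1/10 := le_trans hxε hε1
  have hs1 : x^2 + y^4 ≤ 1/50 := by nlinarith [sq_nonneg y]
  by_contra hcon
  push_neg at hcon
  have h1 : 0 ≤ (x - y^2) * (x^2 + y^4) := mul_nonneg (by linarith) hs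
  have hc : 0 ≤ 2 - 8*y^2 - 16*y^4*(x^2+y^4) := by nlinarith [sq_nonneg y, sq_nonneg (y^2)]
  have h2 : 0 ≤ y^2 * (x^2+y^4) * (2 - 8*y^2 - 16*y^4*(x^2+y^4)) :=
    mul_nonneg (mul_nonneg (sq_nonneg y) hs) hc
  nlinarith [h1, h2]
end

section
/- Consider sequences {x_k}, {y_k} of positive reals satisfying x_k = x_{k+1}(1 + 2(x_{k+1}² + y_{k+1}⁴)) and y_k = y_{k+1}(1 + 4 y_{k+1}²(x_{k+1}² + y_{k+1}⁴)) for all k = 0, 1, 2, …. There exists δ > 0 such that whenever x_0 > 0, y_0 > 0 and ‖(x_0, y_0)‖ ≤ δ, there exists k_0 such that x_k < y_k² for all k > k_0. -/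
set_option maxHeartbeats 1000000

/-- Key inequality for persistence: `(1+4c s)^2 ≤ 1+2s` for small `c`, `s`. -/
private lemma stmt19_key1 (c s : ℝ) (hc : 0 ≤ c) (hc1 : c ≤ 1/10000) (hs : 0 < s)
    (hs1 : s ≤ 1) : (1 + 4*c*s)^2 ≤ 1 + 2*s := by
  nlinarith [mul_nonneg hc hs.le, mul_nonneg (mul_nonneg hc hc) (mul_nonneg hs.le hs.le),
    mul_nonneg hc (mul_nonneg hs.le hs.le)]

/-- Persistence: if `x k < (y k)^2` then `x (k+1) < (y (k+1))^2`. -/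
private lemma stmt19_pers (a b xk yk : ℝ) (ha : 0 < a) (ha1 : a ≤ 1/100)
    (hb : 0 < b) (hb1 : b ≤ 1/100)
    (hxk : xk = a * (1 + 2*(a^2 + b^4)))
    (hyk : yk = b * (1 + 4*b^2*(a^2 + b^4)))
    (h : xk < yk^2) : a < b^2 := by
  have hs : 0 < a^2 + b^4 := by positivity
  have ha2 : a^2 ≤ 1/10000 := by nlinarith
  have hc1 : b^2 ≤ 1/10000 := by nlinarith
  have hb4 : b^4 ≤ 1/10000 := by nlinarith [sq_nonneg b, sq_nonneg (b^2)]
  have hs1 : a^2 + b^4 ≤ 1 := by linarith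
  have key := stmt19_key1 (b^2) (a^2+b^4) (sq_nonneg b) hc1 hs hs1
  have h2 : a * (1 + 2*(a^2+b^4)) < b^2 * (1 + 2*(a^2+b^4)) := by
    calc a * (1 + 2*(a^2+b^4)) = xk := hxk.symm
      _ < yk^2 := h
      _ = b^2 * (1 + 4*b^2*(a^2+b^4))^2 := by rw [hyk]; ring
      _ ≤ b^2 * (1 + 2*(a^2+b^4)) := by
          exact mul_le_mul_of_nonneg_left key (sq_nonneg b)
  exact lt_of_mul_lt_mul_right h2 (by positivity)

/-- Inverse-square growth step for `x`. -/
private lemma stmt19_step1 (a b T : ℝ) (ha : 0 < a) (ha1 : a ≤ 1/100)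
    (hb : 0 < b) (hba : b^2 ≤ a) (hT : 0 < T)
    (ih : 1 ≤ a^2 * (1 + 2*(a^2 + b^4))^2 * T) : 1 ≤ a^2 * (T + 24) := by
  set s : ℝ := a^2 + b^4 with hsdef
  have hs : 0 < s := by positivity
  have hs2a : s ≤ 2*a^2 := by nlinarith [sq_nonneg b]
  have hs1 : s ≤ 1 := by nlinarith
  have key : (1:ℝ) * (1+2*s)^2 ≤ (a^2 * (T + 24)) * (1+2*s)^2 := by
    nlinarith [ih, mul_nonneg (mul_nonneg (sq_nonneg a) hT.le) (mul_nonneg hs.le hs.le),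
      mul_nonneg (mul_nonneg (sq_nonneg a) hT.le) hs.le,
      mul_nonneg (sq_nonneg a) hs.le,
      mul_nonneg (sq_nonneg a) (mul_nonneg hs.le hs.le),
      mul_nonneg hs.le hs.le]
  exact le_of_mul_le_mul_right key (by positivity)

/-- Ratio growth step: `(y k)^2 / x k` grows by a factor `1 + x(k+1)^2`. -/
private lemma stmt19_step2 (a b xk yk : ℝ) (ha : 0 < a) (ha1 : a ≤ 1/100)
    (hb : 0 < b) (hba : b^2 ≤ a)
    (hxk : xk = a * (1 + 2*(a^2 + b^4)))
    (hyk : yk = b * (1 + 4*b^2*(a^2 + b^4))) :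
    yk^2 * a * (1 + a^2) ≤ b^2 * xk := by
  obtain ⟨s, hsdef⟩ : ∃ s : ℝ, s = a^2 + b^4 := ⟨_, rfl⟩
  rw [← hsdef] at hxk hyk
  have hs : 0 < s := by rw [hsdef]; positivity
  have hs2a : s ≤ 2*a^2 := by nlinarith [sq_nonneg b]
  have hs1 : s ≤ 1 := by nlinarith
  have hba2 : b^2 ≤ 1/100 := le_trans hba ha1
  have key : (1 + 4*b^2*s)^2 * (1 + a^2) ≤ 1 + 2*s := by
    have ha2s : a^2 ≤ s := by nlinarith [sq_nonneg (b^2)]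
    have ha21 : a^2 ≤ 1 := by linarith
    have hu0 : (0:ℝ) ≤ b^2*s := mul_nonneg (sq_nonneg b) hs.le
    have hu1 : b^2*s ≤ s/100 := by nlinarith [mul_nonneg (by linarith : (0:ℝ) ≤ 1/100 - b^2) hs.le]
    have hu2 : b^2*s ≤ 1/100 := by nlinarith [mul_nonneg (sq_nonneg b) (by linarith : (0:ℝ) ≤ 1 - s)]
    have m1 : (b^2*s)*(b^2*s) ≤ (b^2*s)*(1/100) := mul_le_mul_of_nonneg_left hu2 hu0
    have m2 : (b^2*s)*a^2 ≤ (b^2*s)*1 := mul_le_mul_of_nonneg_left ha21 hu0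
    have m3 : ((b^2*s)*(b^2*s))*a^2 ≤ ((b^2*s)*(b^2*s))*1 :=
      mul_le_mul_of_nonneg_left ha21 (mul_nonneg hu0 hu0)
    nlinarith [m1, m2, m3, hu1, ha2s, hu0]
  calc yk^2 * a * (1 + a^2) = (b^2 * a) * ((1 + 4*b^2*s)^2 * (1 + a^2)) := by rw [hyk]; ring
    _ ≤ (b^2 * a) * (1 + 2*s) := mul_le_mul_of_nonneg_left key (by positivity)
    _ = b^2 * xk := by rw [hxk]; ring

theorem stmt19 :
    ∃ δ : ℝ, 0 < δ ∧ ∀ x y : ℕ → ℝ,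
      (∀ k, 0 < x k) → (∀ k, 0 < y k) →
      (∀ k, x k = x (k + 1) * (1 + 2 * ((x (k + 1)) ^ 2 + (y (k + 1)) ^ 4))) →
      (∀ k, y k = y (k + 1) * (1 + 4 * (y (k + 1)) ^ 2 * ((x (k + 1)) ^ 2 + (y (k + 1)) ^ 4))) →
      Real.sqrt ((x 0) ^ 2 + (y 0) ^ 2) ≤ δ →
      ∃ k₀ : ℕ, ∀ k > k₀, x k < (y k) ^ 2 := by
  refine ⟨1/100, by norm_num, ?_⟩
  intro x y hx hy hrx hry hδ
  have hx0 : x 0 ≤ 1/100 := by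
    have h1 : x 0 ≤ Real.sqrt ((x 0)^2 + (y 0)^2) := by
      calc x 0 = Real.sqrt ((x 0)^2) := (Real.sqrt_sq (hx 0).le).symm
        _ ≤ _ := Real.sqrt_le_sqrt (by nlinarith [sq_nonneg (y 0)])
    linarith
  have hy0 : y 0 ≤ 1/100 := by
    have h1 : y 0 ≤ Real.sqrt ((x 0)^2 + (y 0)^2) := by
      calc y 0 = Real.sqrt ((y 0)^2) := (Real.sqrt_sq (hy 0).le).symm
        _ ≤ _ := Real.sqrt_le_sqrt (by nlinarith [sq_nonneg (x 0)])
    linarith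
  have hxmono : ∀ k, x (k+1) ≤ x k := by
    intro k
    nlinarith [hrx k, hx (k+1), sq_nonneg (x (k+1)), pow_pos (hy (k+1)) 4]
  have hymono : ∀ k, y (k+1) ≤ y k := by
    intro k
    nlinarith [hry k, hy (k+1), sq_nonneg (x (k+1)), sq_nonneg (y (k+1)),
      pow_pos (hy (k+1)) 4, mul_nonneg (pow_pos (hy (k+1)) 2).le (sq_nonneg (x (k+1)))]
  have hxle : ∀ k, x k ≤ 1/100 := by
    intro k; induction k with
    | zero => exact hx0
    | succ k ih => linarith [hxmono k]
  have hyle : ∀ k, y k ≤ 1/100 := by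
    intro k; induction k with
    | zero => exact hy0
    | succ k ih => linarith [hymono k]
  have pers : ∀ k, x k < (y k)^2 → x (k+1) < (y (k+1))^2 :=
    fun k hk => stmt19_pers (x (k+1)) (y (k+1)) (x k) (y k) (hx (k+1)) (hxle (k+1))
      (hy (k+1)) (hyle (k+1)) (hrx k) (hry k) hk
  have hex : ∃ k, x k < (y k)^2 := by
    by_contra hcon
    push_neg at hcon
    set C : ℝ := 1/(x 0)^2 with hC
    have hC0 : 0 < C := div_pos one_pos (pow_pos (hx 0) 2)
    have claim1 : ∀ k : ℕ, 1 ≤ (x k)^2 * (C + 24*k) := by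
      intro k; induction k with
      | zero =>
        simp only [Nat.cast_zero, mul_zero, add_zero, hC]
        rw [mul_one_div, div_self (pow_ne_zero 2 (hx 0).ne')]
      | succ k ih =>
        have hT : (0:ℝ) < C + 24*k := by positivity
        have ih' : 1 ≤ (x (k+1))^2 * (1 + 2*((x (k+1))^2 + (y (k+1))^4))^2 * (C + 24*k) := by
          calc (1:ℝ) ≤ (x k)^2 * (C+24*k) := ih
            _ = (x (k+1))^2 * (1 + 2*((x (k+1))^2 + (y (k+1))^4))^2 * (C+24*k) := by
                rw [hrx k]; ring
        have h2 := stmt19_step1 (x (k+1)) (y (k+1)) (C + 24*k) (hx (k+1)) (hxle (k+1))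
          (hy (k+1)) (hcon (k+1)) hT ih'
        calc (1:ℝ) ≤ (x (k+1))^2 * ((C + 24*k) + 24) := h2
          _ = (x (k+1))^2 * (C + 24*((k+1:ℕ):ℝ)) := by push_cast; ring
    -- ratio growth
    have hz : ∀ k, (y k)^2 / x k * (1 + (x (k+1))^2) ≤ (y (k+1))^2 / x (k+1) := by
      intro k
      have h1 := stmt19_step2 (x (k+1)) (y (k+1)) (x k) (y k) (hx (k+1)) (hxle (k+1))
        (hy (k+1)) (hcon (k+1)) (hrx k) (hry k)
      rw [div_mul_eq_mul_div, div_le_div_iff₀ (hx k) (hx (k+1))]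
      calc (y k)^2 * (1 + (x (k+1))^2) * x (k+1)
          = (y k)^2 * x (k+1) * (1 + (x (k+1))^2) := by ring
        _ ≤ (y (k+1))^2 * x k := h1
    have hz0 : 0 < (y 0)^2 / x 0 := div_pos (pow_pos (hy 0) 2) (hx 0)
    have hzle1 : ∀ k, (y k)^2 / x k ≤ 1 := fun k => div_le_one_of_le₀ (hcon k) (hx k).le
    have hSnn : ∀ k : ℕ, 0 ≤ ∑ j ∈ Finset.range k, (x (j+1))^2 :=
      fun k => Finset.sum_nonneg fun j _ => sq_nonneg _
    have claim3 : ∀ k, (y 0)^2 / x 0 * (1 + ∑ j ∈ Finset.range k, (x (j+1))^2) ≤ (y k)^2 / x k := by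
      intro k; induction k with
      | zero => simp
      | succ k ih =>
        have h1 : (y k)^2 / x k * (1 + (x (k+1))^2) ≤ (y (k+1))^2 / x (k+1) := hz k
        have h2 : ∑ j ∈ Finset.range (k+1), (x (j+1))^2
            = (∑ j ∈ Finset.range k, (x (j+1))^2) + (x (k+1))^2 := Finset.sum_range_succ _ _
        have hzk : 0 < (y k)^2 / x k := div_pos (pow_pos (hy k) 2) (hx k)
        have h3 : (y 0)^2 / x 0 * (1 + ∑ j ∈ Finset.range (k+1), (x (j+1))^2)
            ≤ (y k)^2 / x k * (1 + (x (k+1))^2) := by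
          rw [h2]
          nlinarith [hSnn k, sq_nonneg (x (k+1)), hz0, ih,
            mul_nonneg (hSnn k) (sq_nonneg (x (k+1))),
            mul_le_mul_of_nonneg_right ih (sq_nonneg (x (k+1)))]
        linarith
    have hterm : ∀ j : ℕ, (1/(C+24)) * (1/((j:ℝ)+1)) ≤ (x (j+1))^2 := by
      intro j
      have h1 : 1 ≤ (x (j+1))^2 * (C + 24*((j:ℝ)+1)) := by
        have := claim1 (j+1); push_cast at this ⊢; linarith
      have hj1 : (0:ℝ) < (j:ℝ)+1 := by positivity
      have h2 : C + 24*((j:ℝ)+1) ≤ (C+24)*((j:ℝ)+1) := by nlinarith [hC0]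
      rw [div_mul_div_comm, one_mul, div_le_iff₀ (by positivity)]
      calc (1:ℝ) ≤ (x (j+1))^2 * (C + 24*((j:ℝ)+1)) := h1
        _ ≤ (x (j+1))^2 * ((C+24)*((j:ℝ)+1)) := mul_le_mul_of_nonneg_left h2 (sq_nonneg _)
    have hSlb : ∀ k : ℕ, (1/(C+24)) * (∑ j ∈ Finset.range k, 1/((j:ℝ)+1))
        ≤ ∑ j ∈ Finset.range k, (x (j+1))^2 := by
      intro k
      rw [Finset.mul_sum]
      exact Finset.sum_le_sum fun j _ => hterm j
    have hdiv := Real.tendsto_sum_range_one_div_nat_succ_atTop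
    obtain ⟨k, hk⟩ := (hdiv.eventually_gt_atTop ((C+24) * (1/((y 0)^2 / x 0)))).exists
    have hbound : (y 0)^2 / x 0 * (1 + ∑ j ∈ Finset.range k, (x (j+1))^2) ≤ 1 :=
      le_trans (claim3 k) (hzle1 k)
    have hC24 : (0:ℝ) < C + 24 := by linarith
    have hfin : 1/((y 0)^2 / x 0) < ∑ j ∈ Finset.range k, (x (j+1))^2 := by
      calc 1/((y 0)^2 / x 0) = (1/(C+24)) * ((C+24) * (1/((y 0)^2 / x 0))) := by
            field_simp
        _ < (1/(C+24)) * (∑ j ∈ Finset.range k, 1/((j:ℝ)+1)) :=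
            mul_lt_mul_of_pos_left hk (by positivity)
        _ ≤ _ := hSlb k
    rw [one_div, inv_lt_iff_one_lt_mul₀' hz0] at hfin
    nlinarith [hz0, hSnn k, hfin, hbound]
  obtain ⟨k, hk⟩ := hex
  refine ⟨k, ?_⟩
  have hall : ∀ j, x (k+j) < (y (k+j))^2 := by
    intro j; induction j with
    | zero => simpa using hk
    | succ j ih => exact pers (k+j) ih
  intro m hm
  obtain ⟨j, rfl⟩ := Nat.exists_eq_add_of_le hm.le
  exact hall j
end
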